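/- arXiv:1710.08662 — 7 statements merged into one kernel-verified Lean document; each statement's English description precedes it below -/
import Mathlib

section
/- Let k,l,n ∈ ℕ, let p ∈ P(k,l), let A be a unital C*-algebra and suppose the self-adjoint elements u_{ij} ∈ A (1 ≤ i,j ≤ n) fulfill the relations R(p). Then the elements u'_{ij} := Σ_{a=1}^n u_{ia} ⊗ u_{aj} of the algebraic tensor product A ⊗ A (with its canonical *-algebra structure, where (x⊗y)* = x*⊗y*) are self-adjoint and fulfill the relations R(p). -/
open scoped BigOperators

/-- A partition with `k` upper and `l` lower points, encoded as an equivalence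
relation on the disjoint union of the points; the blocks of the partition are
the equivalence classes. -/
abbrev PartitionKL (k l : ℕ) := Setoid (Fin k ⊕ Fin l)

namespace PartitionKL

/-- `DeltaCond p α β` holds iff `δ_p(α,β) = 1`, i.e. the labelling of the upper
points by `α` and of the lower points by `β` is constant on every block of `p`. -/
def DeltaCond {k l n : ℕ} (p : PartitionKL k l) (α : Fin k → Fin n) (β : Fin l → Fin n) : Prop :=
  ∀ x y : Fin k ⊕ Fin l, p.r x y → Sum.elim α β x = Sum.elim α β y

/-- The ordered product `u_{γ₁α₁} ⋯ u_{γ_mα_m}`. -/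
def uProd {m n : ℕ} {A : Type*} [Monoid A] (u : Fin n → Fin n → A) (γ α : Fin m → Fin n) : A :=
  (List.ofFn fun i : Fin m => u (γ i) (α i)).prod

open Classical in
/-- The elements `u i j` fulfill the relations `R(p)` associated to the partition `p`. -/
def FulfillsR {k l n : ℕ} {A : Type*} [Ring A] (p : PartitionKL k l) (u : Fin n → Fin n → A) :
    Prop :=
  ∀ (α : Fin k → Fin n) (β : Fin l → Fin n),
    (∑ γ : Fin k → Fin n, if DeltaCond p γ β then uProd u γ α else 0)
      = ∑ γ' : Fin l → Fin n, if DeltaCond p α γ' then uProd u β γ' else 0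

end PartitionKL

/-!
The products of `u'` expand as matrix products in the multi-indices:
`u'_{γ₁α₁} ⋯ u'_{γ_kα_k} = ∑_b (u_{γ₁b₁} ⋯ u_{γ_kb_k}) ⊗ (u_{b₁α₁} ⋯ u_{b_kα_k})`.
So `R(p)` for `u'` is obtained by applying `R(p)` first in the left tensor leg and then in
the right one.
-/

open scoped TensorProduct

namespace PartitionKL

variable {R A B : Type*} {m n : ℕ}

lemma uProd_succ [Monoid A] (u : Fin n → Fin n → A) (γ α : Fin (m + 1) → Fin n) :
    uProd u γ α = u (γ 0) (α 0) * uProd u (Fin.tail γ) (Fin.tail α) := by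
  simp [uProd, List.ofFn_succ, Fin.tail]

lemma uProd_sum_tmul [CommSemiring R] [Semiring A] [Algebra R A] [Semiring B] [Algebra R B]
    (u : Fin n → Fin n → A) (v : Fin n → Fin n → B) (γ α : Fin m → Fin n) :
    uProd (fun i j => ∑ a, u i a ⊗ₜ[R] v a j) γ α
      = ∑ b : Fin m → Fin n, uProd u γ b ⊗ₜ uProd v b α := by
  induction m with
  | zero => simp [uProd, Algebra.TensorProduct.one_def]
  | succ m ih =>
    rw [uProd_succ, ih, ← (Fin.consEquiv fun _ => Fin n).sum_comp, Fintype.sum_prod_type,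
      Finset.sum_mul_sum]
    simp [Fin.consEquiv, uProd_succ, Algebra.TensorProduct.tmul_mul_tmul]

theorem FulfillsR.sum_tmul [CommRing R] [Ring A] [Algebra R A] [Ring B] [Algebra R B]
    {k l : ℕ} {p : PartitionKL k l} {u : Fin n → Fin n → A} {v : Fin n → Fin n → B}
    (hu : FulfillsR p u) (hv : FulfillsR p v) :
    FulfillsR p (fun i j => ∑ a, u i a ⊗ₜ[R] v a j) := by
  classical
  intro α β
  calc (∑ γ, if DeltaCond p γ β then uProd (fun i j => ∑ a, u i a ⊗ₜ[R] v a j) γ α else 0)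
      = ∑ b, (∑ γ, if DeltaCond p γ β then uProd u γ b else 0) ⊗ₜ[R] uProd v b α := by
        simp only [uProd_sum_tmul, TensorProduct.sum_tmul, TensorProduct.ite_tmul]
        rw [Finset.sum_comm]
        simp only [Finset.sum_ite_irrel, Finset.sum_const_zero]
    _ = ∑ b, (∑ γ', if DeltaCond p b γ' then uProd u β γ' else 0) ⊗ₜ[R] uProd v b α := by
        simp only [hu _ β]
    _ = ∑ γ', uProd u β γ' ⊗ₜ[R] ∑ b, if DeltaCond p b γ' then uProd v b α else 0 := by
        simp only [TensorProduct.sum_tmul, TensorProduct.tmul_sum, TensorProduct.ite_tmul,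
          TensorProduct.tmul_ite]
        exact Finset.sum_comm
    _ = ∑ γ', uProd u β γ' ⊗ₜ[R] ∑ γ'', if DeltaCond p α γ'' then uProd v γ' γ'' else 0 := by
        simp only [hv α]
    _ = ∑ γ'', if DeltaCond p α γ'' then
          uProd (fun i j => ∑ a, u i a ⊗ₜ[R] v a j) β γ'' else 0 := by
        simp only [uProd_sum_tmul, TensorProduct.tmul_sum, TensorProduct.tmul_ite]
        rw [Finset.sum_comm]
        simp only [Finset.sum_ite_irrel, Finset.sum_const_zero]

end PartitionKL

open scoped TensorProduct in
/-- If self-adjoint elements `u i j` of a unital C*-algebra `A` fulfill the relations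
`R(p)`, then the elements `u' i j := ∑ a, u i a ⊗ u a j` of the algebraic tensor
product `A ⊗ A` (with its canonical *-algebra structure, whose star `S` is the unique
additive map with `S (x ⊗ y) = star x ⊗ star y`) are self-adjoint and fulfill `R(p)`. -/
theorem comultiplication_fulfillsR {k l n : ℕ} (p : PartitionKL k l)
    {A : Type*} [CStarAlgebra A] (u : Fin n → Fin n → A)
    (hsa : ∀ i j, star (u i j) = u i j)
    (hu : PartitionKL.FulfillsR p u)
    (S : A ⊗[ℂ] A →+ A ⊗[ℂ] A)
    (hS : ∀ x y : A, S (x ⊗ₜ[ℂ] y) = star x ⊗ₜ[ℂ] star y) :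
    (∀ i j : Fin n,
        S (∑ a : Fin n, u i a ⊗ₜ[ℂ] u a j) = ∑ a : Fin n, u i a ⊗ₜ[ℂ] u a j)
      ∧ PartitionKL.FulfillsR p (fun i j => ∑ a : Fin n, u i a ⊗ₜ[ℂ] u a j) := by
  refine ⟨fun i j => ?_, hu.sum_tmul hu⟩
  simp only [map_sum, hS, hsa]
end

section
/- Let n ∈ ℕ, l ≥ 2, and let p ∈ P(0,l) be a partition whose first (leftmost) lower point is not a singleton block. Let A be a unital C*-algebra and suppose the self-adjoint elements u_{ij} ∈ A (1 ≤ i,j ≤ n) fulfill the relations R(p). Then the matrix u = (u_{ij}) ∈ M_n(A) has a right inverse. -/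
open scoped BigOperators

namespace Partition

/-- `DeltaCond p α β` holds iff `δ_p(α,β) = 1`, i.e. the labelling of the upper
points by `α` and of the lower points by `β` is constant on every block of `p`. -/
def DeltaCond {k l n : ℕ} (p : PartitionKL k l) (α : Fin k → Fin n) (β : Fin l → Fin n) : Prop :=
  ∀ x y : Fin k ⊕ Fin l, p.r x y → Sum.elim α β x = Sum.elim α β y

/-- The ordered product `u_{γ₁α₁} ⋯ u_{γ_mα_m}`. -/
def uProd {m n : ℕ} {A : Type*} [Monoid A] (u : Fin n → Fin n → A) (γ α : Fin m → Fin n) : A :=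
  (List.ofFn fun i : Fin m => u (γ i) (α i)).prod

open Classical in
/-- The elements `u i j` fulfill the relations `R(p)` associated to the partition `p`. -/
def FulfillsR {k l n : ℕ} {A : Type*} [Ring A] (p : PartitionKL k l) (u : Fin n → Fin n → A) :
    Prop :=
  ∀ (α : Fin k → Fin n) (β : Fin l → Fin n),
    (∑ γ : Fin k → Fin n, if DeltaCond p γ β then uProd u γ α else 0)
      = ∑ γ' : Fin l → Fin n, if DeltaCond p α γ' then uProd u β γ' else 0

end Partition
/-!
Fix a lower point `j ≠ 0` in the block of the first lower point. Sum the relation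
`δ_p(β) · 1 = ∑_γ δ_p(γ) u_{β₁γ₁} ⋯ u_{β_lγ_l}` over all labellings `β` with `β₁ = a`, `β_j = c`
and the other labels free. The left side becomes the number `N a c` of such labellings with
`δ_p(β) = 1`; it vanishes for `a ≠ c` because `1` and `j` lie in one block, and it is positive
for `a = c` (constant labelling). On the right, the sum over `β₁ = a` only touches the leftmost
factor, so the right side is `∑_b u_{ab} W_{bc}` for an explicit matrix `W`. Hence `u W` is a
diagonal matrix with nonzero natural-number entries, which are invertible in the `ℂ`-algebra `A`.
-/

open Finset

theorem Finset.sum_piFinset_prod_ofFn {R ι : Type*} [Semiring R] [DecidableEq ι] :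
    ∀ {m : ℕ} (S : Fin m → Finset ι) (f : Fin m → ι → R),
      ∑ x ∈ Fintype.piFinset S, (List.ofFn fun i => f i (x i)).prod
        = (List.ofFn fun i => ∑ b ∈ S i, f i b).prod
  | 0, S, f => by simp
  | m + 1, S, f => by
    have hS : Fintype.piFinset S
        = (S 0 ×ˢ Fintype.piFinset fun i => S i.succ).map (Fin.consEquiv _).toEmbedding := by
      have h := filter_piFinset_eq_map_consEquiv S fun _ => True
      simp only [filter_true] at h
      exact h
    rw [hS, sum_map, sum_product, List.ofFn_succ, List.prod_cons, sum_mul,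
      ← sum_piFinset_prod_ofFn (fun i => S i.succ) fun i => f i.succ]
    refine sum_congr rfl fun b _ => ?_
    rw [mul_sum]
    simp [List.ofFn_succ]

theorem Matrix.exists_mul_eq_one_of_mul_eq_diagonal {m A : Type*} [Fintype m] [DecidableEq m]
    [Ring A] {U W : Matrix m m A} {d : m → A} (h : U * W = diagonal d) (hd : ∀ i, IsUnit (d i)) :
    ∃ V, U * V = 1 := by
  refine ⟨W * diagonal fun i => (((hd i).unit⁻¹ : Aˣ) : A), ?_⟩
  rw [← Matrix.mul_assoc, h, diagonal_mul_diagonal]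
  simp

namespace Partition

open Classical

variable {A : Type*} [Ring A] {n l : ℕ}

theorem FulfillsR.ite_eq_sum {p : PartitionKL 0 l} {u : Fin n → Fin n → A} (hu : FulfillsR p u)
    (β : Fin l → Fin n) :
    (if DeltaCond p isEmptyElim β then 1 else 0 : A)
      = ∑ γ, if DeltaCond p isEmptyElim γ then uProd u β γ else 0 := by
  have h := hu isEmptyElim β
  rwa [Fintype.sum_subsingleton _ isEmptyElim,
    show uProd u isEmptyElim isEmptyElim = 1 from rfl] at h

noncomputable def deltaCount (p : PartitionKL 0 l) (S : Fin l → Finset (Fin n)) : ℕ :=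
  #{β ∈ Fintype.piFinset S | DeltaCond p isEmptyElim β}

noncomputable def tailFactor (p : PartitionKL 0 (l + 1)) (u : Fin n → Fin n → A)
    (t : Fin l → Finset (Fin n)) (b : Fin n) : A :=
  ∑ γ with γ 0 = b, if DeltaCond p isEmptyElim γ then
    (List.ofFn fun i => ∑ b' ∈ t i, u b' (γ i.succ)).prod else 0

theorem FulfillsR.deltaCount_cons_eq_sum_mul {p : PartitionKL 0 (l + 1)} {u : Fin n → Fin n → A}
    (hu : FulfillsR p u) (a : Fin n) (t : Fin l → Finset (Fin n)) :
    (deltaCount p (Fin.cons ({a} : Finset (Fin n)) t) : A) = ∑ b, u a b * tailFactor p u t b := by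
  set S : Fin (l + 1) → Finset (Fin n) := Fin.cons {a} t
  calc (deltaCount p S : A)
      = ∑ β ∈ Fintype.piFinset S, if DeltaCond p isEmptyElim β then 1 else 0 := by
        rw [sum_boole, deltaCount]
    _ = ∑ γ, if DeltaCond p isEmptyElim γ then
          ∑ β ∈ Fintype.piFinset S, uProd u β γ else 0 := by
        simp_rw [hu.ite_eq_sum]
        rw [sum_comm]
        simp_rw [sum_ite_irrel, sum_const_zero]
    -- the first lower point carries the leftmost factor of `uProd`, so it splits off on the left
    _ = ∑ γ, if DeltaCond p isEmptyElim γ then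
          u a (γ 0) * (List.ofFn fun i => ∑ b' ∈ t i, u b' (γ i.succ)).prod else 0 := by
        refine sum_congr rfl fun γ _ => ?_
        have h : ∑ β ∈ Fintype.piFinset S, uProd u β γ
            = (List.ofFn fun i => ∑ b ∈ S i, u b (γ i)).prod :=
          sum_piFinset_prod_ofFn S fun i b => u b (γ i)
        simp only [h, List.ofFn_succ, List.prod_cons, S, Fin.cons_zero, Fin.cons_succ,
          sum_singleton]
    _ = ∑ b, u a b * tailFactor p u t b := by
        rw [← sum_fiberwise univ fun γ => γ 0]
        refine sum_congr rfl fun b _ => ?_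
        rw [tailFactor, mul_sum]
        refine sum_congr rfl fun γ hγ => ?_
        rw [(mem_filter.1 hγ).2, mul_ite, mul_zero]

theorem deltaCount_cons_update_eq_zero {p : PartitionKL 0 (l + 1)} {j : Fin l}
    (hj : p.r (.inr 0) (.inr j.succ)) {a c : Fin n} (hac : a ≠ c) :
    deltaCount p (Fin.cons ({a} : Finset (Fin n)) (Function.update (fun _ => univ) j {c})) = 0 := by
  rw [deltaCount, card_eq_zero, filter_eq_empty_iff]
  intro β hβ hδ
  rw [Fintype.mem_piFinset] at hβ
  have hβ0 : β 0 = a := by simpa using hβ 0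
  have hβj : β j.succ = c := by simpa using hβ j.succ
  exact hac (hβ0 ▸ hβj ▸ hδ _ _ hj)

theorem deltaCount_cons_update_self_ne_zero (p : PartitionKL 0 (l + 1)) (j : Fin l) (c : Fin n) :
    deltaCount p (Fin.cons ({c} : Finset (Fin n)) (Function.update (fun _ => univ) j {c})) ≠ 0 := by
  rw [deltaCount, ← pos_iff_ne_zero, card_pos]
  refine ⟨fun _ => c, mem_filter.2 ⟨Fintype.mem_piFinset.2 fun i => ?_, ?_⟩⟩
  · cases i using Fin.cases with
    | zero => simp
    | succ i => by_cases hi : i = j <;> simp [hi]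
  · rintro (x | x) (y | y) - <;> first | exact x.elim0 | exact y.elim0 | rfl

theorem FulfillsR.of_mul_tailFactor_eq_diagonal {p : PartitionKL 0 (l + 1)}
    {u : Fin n → Fin n → A} (hu : FulfillsR p u) {j : Fin l} (hj : p.r (.inr 0) (.inr j.succ)) :
    Matrix.of u * Matrix.of (fun b c => tailFactor p u (Function.update (fun _ => univ) j {c}) b)
      = Matrix.diagonal fun c => (deltaCount p
          (Fin.cons ({c} : Finset (Fin n)) (Function.update (fun _ => univ) j {c})) : A) := by
  ext a c
  rw [Matrix.mul_apply]
  simp only [Matrix.of_apply]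
  rw [← hu.deltaCount_cons_eq_sum_mul]
  by_cases hac : a = c
  · rw [hac, Matrix.diagonal_apply_eq]
  · rw [deltaCount_cons_update_eq_zero hj hac, Matrix.diagonal_apply_ne _ hac, Nat.cast_zero]

end Partition

/-- If the self-adjoint elements `u i j` fulfill the relations `R(p)` for a partition
`p ∈ P(0,l)` whose first (leftmost) lower point is not a singleton block, then the
matrix `u` has a right inverse in `M_n(A)`. -/
theorem rightInvertible_of_fulfillsR {n l : ℕ} (hl : 2 ≤ l) (p : PartitionKL 0 l)
    (hfirst : ∃ j : Fin l, (j : ℕ) ≠ 0 ∧ p.r (Sum.inr ⟨0, by omega⟩) (Sum.inr j))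
    {A : Type*} [CStarAlgebra A] (u : Fin n → Fin n → A)
    (hu : Partition.FulfillsR p u) :
    ∃ V : Matrix (Fin n) (Fin n) A, Matrix.of u * V = 1 := by
  obtain ⟨l, rfl⟩ : ∃ l', l = l' + 1 := ⟨l - 1, by omega⟩
  obtain ⟨j, hj0, hj⟩ := hfirst
  obtain ⟨j, rfl⟩ := Fin.exists_succ_eq.2 (Fin.ne_of_val_ne hj0 : j ≠ 0)
  refine Matrix.exists_mul_eq_one_of_mul_eq_diagonal (hu.of_mul_tailFactor_eq_diagonal hj)
    fun c => ?_
  have hc := Nat.cast_ne_zero (R := ℂ) |>.2 (Partition.deltaCount_cons_update_self_ne_zero p j c)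
  simpa using hc.isUnit.map (algebraMap ℂ A)
end

section
/- Let n ∈ ℕ, k ≥ 2, and let q ∈ P(k,0) be a partition whose last (rightmost) upper point is not a singleton block. Let A be a unital C*-algebra and suppose the self-adjoint elements u_{ij} ∈ A (1 ≤ i,j ≤ n) fulfill the relations R(q). Then the matrix u = (u_{ij}) ∈ M_n(A) has a left inverse. -/
open scoped BigOperators

/-!
Take `α = (j, …, j, a)` in `R(q)`. Since `q` has no lower points, the right-hand side is `δ_q(α)`,
and because the last upper point shares its block with another one, `δ_q(α) = δ_{ja}`. Splitting off
the last factor `u_{γ_k a}` on the left-hand side exhibits it as the `(j, a)` entry of `V u`, where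
`V_{jb} = ∑ {u_{γ₁j} ⋯ u_{γ_{k-1}j} | δ_q(γ) = 1, γ_k = b}`.
-/

namespace Partition

variable {m n : ℕ} {A : Type*}

theorem uProd_succ [Monoid A] (u : Fin n → Fin n → A) (γ α : Fin (m + 1) → Fin n) :
    uProd u γ α = uProd u (Fin.init γ) (Fin.init α) * u (γ (Fin.last m)) (α (Fin.last m)) := by
  rw [uProd, uProd, List.ofFn_succ', List.prod_concat]
  rfl

theorem deltaCond_snoc_const_iff {p : PartitionKL (m + 1) 0} {i : Fin (m + 1)}
    (hi : i ≠ Fin.last m) (hp : p.r (Sum.inl (Fin.last m)) (Sum.inl i)) (β : Fin 0 → Fin n)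
    (j a : Fin n) : DeltaCond p (Fin.snoc (fun _ => j) a) β ↔ a = j := by
  constructor
  · intro h
    obtain ⟨i, rfl⟩ := Fin.exists_castSucc_eq.mpr hi
    simpa using h _ _ hp
  · rintro rfl x y _
    have hconst : (Fin.snoc (fun _ => a) a : Fin (m + 1) → Fin n) = fun _ => a :=
      Fin.snoc_init_self (q := fun _ => a)
    rw [hconst, Subsingleton.elim β fun _ => a]
    cases x <;> cases y <;> rfl

open Classical in
theorem FulfillsR.sum_eq_ite [Ring A] {k : ℕ} {p : PartitionKL k 0} {u : Fin n → Fin n → A}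
    (hu : FulfillsR p u) (α : Fin k → Fin n) (β : Fin 0 → Fin n) :
    (∑ γ : Fin k → Fin n, if DeltaCond p γ β then uProd u γ α else 0)
      = if DeltaCond p α β then 1 else 0 := by
  rw [hu α β, Fintype.sum_unique, Subsingleton.elim default β]
  rfl

open Classical in
noncomputable def leftInv [Ring A] (p : PartitionKL (m + 1) 0) (u : Fin n → Fin n → A) :
    Matrix (Fin n) (Fin n) A :=
  Matrix.of fun j b => ∑ γ : Fin (m + 1) → Fin n,
    if DeltaCond p γ Fin.elim0 ∧ γ (Fin.last m) = b then uProd u (Fin.init γ) (fun _ => j) else 0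

open Classical in
theorem leftInv_mul_apply [Ring A] (p : PartitionKL (m + 1) 0) (u : Fin n → Fin n → A)
    (j a : Fin n) :
    (leftInv p u * Matrix.of u) j a = ∑ γ : Fin (m + 1) → Fin n,
      if DeltaCond p γ Fin.elim0 then uProd u γ (Fin.snoc (fun _ => j) a) else 0 := by
  simp only [leftInv, Matrix.mul_apply, Matrix.of_apply, Finset.sum_mul]
  rw [Finset.sum_comm]
  refine Finset.sum_congr rfl fun γ _ => ?_
  by_cases hγ : DeltaCond p γ Fin.elim0
  · simp [hγ, uProd_succ]
  · simp [hγ]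

end Partition

/-- If the self-adjoint elements `u i j` fulfill the relations `R(q)` for a partition
`q ∈ P(k,0)` whose last (rightmost) upper point is not a singleton block, then the
matrix `u` has a left inverse in `M_n(A)`. -/
theorem leftInvertible_of_fulfillsR {n k : ℕ} (hk : 2 ≤ k) (q : PartitionKL k 0)
    (hlast : ∃ i : Fin k, (i : ℕ) ≠ k - 1 ∧ q.r (Sum.inl ⟨k - 1, by omega⟩) (Sum.inl i))
    {A : Type*} [CStarAlgebra A] (u : Fin n → Fin n → A)
    (hu : Partition.FulfillsR q u) :
    ∃ V : Matrix (Fin n) (Fin n) A, V * Matrix.of u = 1 := by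
  obtain ⟨m, rfl⟩ : ∃ m, k = m + 1 := ⟨k - 1, by omega⟩
  obtain ⟨i, hi, hqi⟩ := hlast
  have hi : i ≠ Fin.last m := fun h => hi (by simp [h])
  refine ⟨Partition.leftInv q u, Matrix.ext fun j a => ?_⟩
  rw [Partition.leftInv_mul_apply, hu.sum_eq_ite, Partition.deltaCond_snoc_const_iff hi hqi,
    Matrix.one_apply]
  simp only [eq_comm]
end

section
/- Let n ∈ ℕ and k,l ≥ 2. Let p ∈ P(0,l) be a partition which is not the tensor power of l lower singletons (i.e., not every block of p is a singleton) and let q ∈ P(k,0) be a partition which is not the tensor power of k upper singletons. Let A be a unital C*-algebra and suppose the self-adjoint elements u_{ij} ∈ A (1 ≤ i,j ≤ n) fulfill the relations R(p) and R(q). Then the matrix u = (u_{ij}) is invertible in M_n(A). -/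
open scoped BigOperators

/-- A partition with `k` upper and `l` lower points, encoded as an equivalence
relation on the disjoint union of the points; the blocks of the partition are
the equivalence classes. -/
abbrev PointPartition (k l : ℕ) := Setoid (Fin k ⊕ Fin l)

namespace PointPartition

/-- `DeltaCond p α β` holds iff `δ_p(α,β) = 1`, i.e. the labelling of the upper
points by `α` and of the lower points by `β` is constant on every block of `p`. -/
def DeltaCond {k l n : ℕ} (p : PointPartition k l) (α : Fin k → Fin n) (β : Fin l → Fin n) : Prop :=
  ∀ x y : Fin k ⊕ Fin l, p.r x y → Sum.elim α β x = Sum.elim α β y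

/-- The ordered product `u_{γ₁α₁} ⋯ u_{γ_mα_m}`. -/
def uProd {m n : ℕ} {A : Type*} [Monoid A] (u : Fin n → Fin n → A) (γ α : Fin m → Fin n) : A :=
  (List.ofFn fun i : Fin m => u (γ i) (α i)).prod

open Classical in
/-- The elements `u i j` fulfill the relations `R(p)` associated to the partition `p`. -/
def FulfillsR {k l n : ℕ} {A : Type*} [Ring A] (p : PointPartition k l) (u : Fin n → Fin n → A) :
    Prop :=
  ∀ (α : Fin k → Fin n) (β : Fin l → Fin n),
    (∑ γ : Fin k → Fin n, if DeltaCond p γ β then uProd u γ α else 0)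
      = ∑ γ' : Fin l → Fin n, if DeltaCond p α γ' then uProd u β γ' else 0

end PointPartition

/-!
`R(p)` for `p ∈ P(0,l)` says that `u^{⊗l}` fixes `T_p = ∑_{γ constant on the blocks of p} e_γ`.
Expand the coordinates of `u^{⊗l} T_p` along the first leg: every singleton block in front of
the first non-singleton block contributes a row sum `s = ∑ₘ u_{i₀ m}`, and the first point of a
non-singleton block, labelled `i` while all later labels are `j`, produces `(u X)_{ij}`. So
`s^a (u X) = 1` for some `a` and an explicit matrix `X`. As `s` is self-adjoint, the right
inverse of `s^a` read off this identity also gives a left inverse after taking adjoints; hence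
`s^a` is a unit and `u` has a right inverse. For `q` the same argument gives a right inverse of
`uᵀ`, whose adjoint is a left inverse of `u`.
-/

namespace Setoid

variable {α β γ : Type*}

theorem comap_le_ker_comp_iff {f : β → α} (hf : Function.Surjective f) {r : Setoid α}
    {g : α → γ} : r.comap f ≤ ker (g ∘ f) ↔ r ≤ ker g := by
  refine ⟨fun h x y hxy => ?_, fun h x y hxy => h hxy⟩
  obtain ⟨x, rfl⟩ := hf x
  obtain ⟨y, rfl⟩ := hf y
  exact h hxy

theorem exists_ne_comap_rel {f : β → α} (hf : Function.Surjective f) {r : Setoid α}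
    (h : ∃ x y, x ≠ y ∧ r x y) : ∃ x y, x ≠ y ∧ r.comap f x y := by
  obtain ⟨x, y, hxy, hr⟩ := h
  obtain ⟨x, rfl⟩ := hf x
  obtain ⟨y, rfl⟩ := hf y
  exact ⟨x, y, fun h => hxy (congrArg f h), hr⟩

end Setoid

theorem Sum.inl_surjective_of_isEmpty {α β : Type*} [IsEmpty β] :
    Function.Surjective (Sum.inl : α → α ⊕ β) := by
  rintro (a | b)
  · exact ⟨a, rfl⟩
  · exact isEmptyElim b

theorem Sum.inr_surjective_of_isEmpty {α β : Type*} [IsEmpty α] :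
    Function.Surjective (Sum.inr : β → α ⊕ β) := by
  rintro (a | b)
  · exact isEmptyElim a
  · exact ⟨b, rfl⟩

theorem Fin.le_ker_cons_iff {α : Type*} {l : ℕ} {r : Setoid (Fin (l + 1))}
    (h0 : ∀ y, r 0 y → y = 0) (a : α) (f : Fin l → α) :
    r ≤ Setoid.ker (Fin.cons a f : Fin (l + 1) → α) ↔ r.comap Fin.succ ≤ Setoid.ker f := by
  refine ⟨fun h x y hxy => by simpa using h hxy, fun h x y hxy => ?_⟩
  cases x using Fin.cases with
  | zero => rw [h0 y hxy]
  | succ x =>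
    cases y using Fin.cases with
    | zero => cases Fin.succ_ne_zero x (h0 _ (r.symm hxy))
    | succ y => simpa using h hxy

theorem Fin.le_ker_cons_const_iff {α : Type*} {l : ℕ} {r : Setoid (Fin (l + 1))}
    {b : Fin (l + 1)} (hb : b ≠ 0) (hr : r 0 b) (a c : α) :
    r ≤ Setoid.ker (Fin.cons a fun _ => c : Fin (l + 1) → α) ↔ a = c := by
  refine ⟨fun h => ?_, ?_⟩
  · obtain ⟨b, rfl⟩ := Fin.exists_succ_eq.mpr hb
    simpa using h hr
  · rintro rfl x y _
    cases x using Fin.cases <;> cases y using Fin.cases <;> rfl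

theorem IsSelfAdjoint.isUnit_of_mul_eq_one {R : Type*} [Monoid R] [StarMul R] {x y : R}
    (hx : IsSelfAdjoint x) (h : x * y = 1) : IsUnit x :=
  isUnit_iff_exists_and_exists.mpr
    ⟨⟨y, h⟩, ⟨star y, by simpa [hx.star_eq] using congrArg star h⟩⟩

namespace PointPartition

section

open Classical Matrix

variable {A : Type*} [Ring A] {n l : ℕ}

-- `blockSum r v β` is the `β`-coordinate of `v^{⊗l} T_r`, with `T_r = ∑_{r ≤ ker γ} e_γ`.
noncomputable def blockSum (r : Setoid (Fin l)) (v : Matrix (Fin n) (Fin n) A)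
    (β : Fin l → Fin n) : A :=
  ∑ γ : Fin l → Fin n,
    if r ≤ Setoid.ker γ then (List.ofFn fun t => v (β t) (γ t)).prod else 0

def FixesBlockVector (r : Setoid (Fin l)) (v : Matrix (Fin n) (Fin n) A) : Prop :=
  ∀ β, blockSum r v β = if r ≤ Setoid.ker β then 1 else 0

theorem blockSum_cons (r : Setoid (Fin (l + 1))) (v : Matrix (Fin n) (Fin n) A) (i : Fin n)
    (β : Fin l → Fin n) :
    blockSum r v (Fin.cons i β) = ∑ m, v i m *
      ∑ γ : Fin l → Fin n, if r ≤ Setoid.ker (Fin.cons m γ : Fin (l + 1) → Fin n)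
        then (List.ofFn fun t => v (β t) (γ t)).prod else 0 := by
  rw [blockSum, ← (Fin.consEquiv fun _ => Fin n).sum_comp, Fintype.sum_prod_type]
  refine Finset.sum_congr rfl fun m _ => ?_
  rw [Finset.mul_sum]
  refine Finset.sum_congr rfl fun γ _ => ?_
  rw [mul_ite, mul_zero, List.ofFn_succ, List.prod_cons]
  rfl

theorem blockSum_cons_of_singleton {r : Setoid (Fin (l + 1))} (h0 : ∀ y, r 0 y → y = 0)
    (v : Matrix (Fin n) (Fin n) A) (i : Fin n) (β : Fin l → Fin n) :
    blockSum r v (Fin.cons i β) = (∑ m, v i m) * blockSum (r.comap Fin.succ) v β := by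
  rw [blockSum_cons, Finset.sum_mul]
  simp only [Fin.le_ker_cons_iff h0, blockSum]

theorem FulfillsR.fixesBlockVector_comap_inr {p : PointPartition 0 l} {u : Fin n → Fin n → A}
    (h : p.FulfillsR u) : FixesBlockVector (p.comap Sum.inr) (Matrix.of u) := by
  have hδ : ∀ (α : Fin 0 → Fin n) (β : Fin l → Fin n),
      p.DeltaCond α β ↔ p.comap Sum.inr ≤ Setoid.ker β := fun _ _ =>
    (Setoid.comap_le_ker_comp_iff Sum.inr_surjective_of_isEmpty).symm
  intro β
  simpa [blockSum, uProd, hδ] using (h isEmptyElim β).symm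

theorem FulfillsR.fixesBlockVector_comap_inl {k : ℕ} {q : PointPartition k 0}
    {u : Fin n → Fin n → A} (h : q.FulfillsR u) :
    FixesBlockVector (q.comap Sum.inl) (Matrix.of u)ᵀ := by
  have hδ : ∀ (α : Fin k → Fin n) (β : Fin 0 → Fin n),
      q.DeltaCond α β ↔ q.comap Sum.inl ≤ Setoid.ker α := fun _ _ =>
    (Setoid.comap_le_ker_comp_iff Sum.inl_surjective_of_isEmpty).symm
  intro α
  simpa [blockSum, uProd, hδ] using h α isEmptyElim

theorem exists_scalar_mul_mul_eq_one (v : Matrix (Fin n) (Fin n) A) (i₀ : Fin n) :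
    ∀ {l : ℕ} (r : Setoid (Fin l)) (c : A), (∃ x y, x ≠ y ∧ r x y) →
      (∀ β, c * blockSum r v β = if r ≤ Setoid.ker β then 1 else 0) →
      ∃ (a : ℕ) (X : Matrix (Fin n) (Fin n) A),
        scalar (Fin n) (c * (∑ m, v i₀ m) ^ a) * (v * X) = 1
  | 0, _, _, ⟨x, _⟩, _ => x.elim0
  | l + 1, r, c, hr, h => by
    by_cases h0 : ∀ y, r 0 y → y = 0
    · have hr' : ∃ x y, x ≠ y ∧ r.comap Fin.succ x y := by
        obtain ⟨x, y, hxy, hr⟩ := hr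
        cases x using Fin.cases with
        | zero => exact absurd (h0 y hr).symm hxy
        | succ x =>
          cases y using Fin.cases with
          | zero => exact absurd (h0 _ (r.symm hr)) (Fin.succ_ne_zero x)
          | succ y => exact ⟨x, y, fun h => hxy (congrArg Fin.succ h), hr⟩
      obtain ⟨a, X, hX⟩ := exists_scalar_mul_mul_eq_one v i₀ (r.comap Fin.succ)
        (c * ∑ m, v i₀ m) hr' fun β => by
          simpa [mul_assoc, blockSum_cons_of_singleton h0, Fin.le_ker_cons_iff h0]
            using h (Fin.cons i₀ β)
      exact ⟨a + 1, X, by rwa [pow_succ', ← mul_assoc c]⟩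
    · push Not at h0
      obtain ⟨b, hb, hb0⟩ := h0
      refine ⟨0, of fun m j => ∑ γ : Fin l → Fin n,
        if r ≤ Setoid.ker (Fin.cons m γ : Fin (l + 1) → Fin n)
          then (List.ofFn fun t => v j (γ t)).prod else 0, ?_⟩
      ext i j
      have := h (Fin.cons i fun _ => j)
      rw [blockSum_cons, Fin.le_ker_cons_const_iff hb0 hb] at this
      rw [pow_zero, mul_one, scalar_apply, diagonal_mul, mul_apply, one_apply]
      simp only [of_apply]
      convert this

theorem exists_mul_eq_one_of_fixesBlockVector [StarRing A] (v : Matrix (Fin n) (Fin n) A)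
    (hv : ∀ i j, IsSelfAdjoint (v i j)) {r : Setoid (Fin l)} (hr : ∃ x y, x ≠ y ∧ r x y)
    (h : FixesBlockVector r v) : ∃ X, v * X = 1 := by
  cases isEmpty_or_nonempty (Fin n) with
  | inl _ => exact ⟨1, Subsingleton.elim _ _⟩
  | inr hn =>
    obtain ⟨i₀⟩ := hn
    obtain ⟨a, X, hX⟩ := exists_scalar_mul_mul_eq_one v i₀ r 1 hr fun β => by
      rw [one_mul]
      exact h β
    rw [one_mul] at hX
    have hunit : IsUnit ((∑ m, v i₀ m) ^ a) := by
      refine ((isSelfAdjoint_sum _ fun m _ => hv i₀ m).pow a).isUnit_of_mul_eq_one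
        (y := (v * X) i₀ i₀) ?_
      simpa [scalar_apply, diagonal_mul] using congrFun (congrFun hX i₀) i₀
    obtain ⟨w, hw⟩ := hunit.map (scalar (Fin n))
    rw [← hw, Units.mul_eq_one_iff_inv_eq] at hX
    exact ⟨X * w, by rw [← mul_assoc, ← hX, Units.inv_mul]⟩

end

end PointPartition

theorem invertible_of_fulfillsR_general {n k l : ℕ}
    (p : PointPartition 0 l) (hp_ns : ∃ x y : Fin 0 ⊕ Fin l, x ≠ y ∧ p.r x y)
    (q : PointPartition k 0) (hq_ns : ∃ x y : Fin k ⊕ Fin 0, x ≠ y ∧ q.r x y)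
    {A : Type*} [CStarAlgebra A] (u : Fin n → Fin n → A)
    (hsa : ∀ i j, star (u i j) = u i j)
    (hup : PointPartition.FulfillsR p u) (huq : PointPartition.FulfillsR q u) :
    ∃ V : Matrix (Fin n) (Fin n) A, Matrix.of u * V = 1 ∧ V * Matrix.of u = 1 := by
  obtain ⟨V, hV⟩ := PointPartition.exists_mul_eq_one_of_fixesBlockVector (Matrix.of u) hsa
    (Setoid.exists_ne_comap_rel Sum.inr_surjective_of_isEmpty hp_ns)
    hup.fixesBlockVector_comap_inr
  obtain ⟨W, hW⟩ := PointPartition.exists_mul_eq_one_of_fixesBlockVector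
    (Matrix.of u).transpose (fun i j => hsa j i)
    (Setoid.exists_ne_comap_rel Sum.inl_surjective_of_isEmpty hq_ns)
    huq.fixesBlockVector_comap_inl
  have hu : (Matrix.of u).transpose.conjTranspose = Matrix.of u := by
    ext i j
    exact hsa i j
  have hWu : W.conjTranspose * Matrix.of u = 1 := by
    have h := congrArg Matrix.conjTranspose hW
    rwa [Matrix.conjTranspose_mul, hu, Matrix.conjTranspose_one] at h
  exact ⟨V, hV, by rwa [← left_inv_eq_right_inv hWu hV]⟩

/-- If the self-adjoint elements `u i j` fulfill the relations `R(p)` and `R(q)` for a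
partition `p ∈ P(0,l)` which is not a tensor power of lower singletons and a partition
`q ∈ P(k,0)` which is not a tensor power of upper singletons (`k, l ≥ 2`), then the
matrix `u` is invertible in `M_n(A)`. -/
theorem invertible_of_fulfillsR {n k l : ℕ} (hl : 2 ≤ l) (hk : 2 ≤ k)
    (p : PointPartition 0 l) (hp_ns : ∃ x y : Fin 0 ⊕ Fin l, x ≠ y ∧ p.r x y)
    (q : PointPartition k 0) (hq_ns : ∃ x y : Fin k ⊕ Fin 0, x ≠ y ∧ q.r x y)
    {A : Type*} [CStarAlgebra A] (u : Fin n → Fin n → A)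
    (hsa : ∀ i j, star (u i j) = u i j)
    (hup : PointPartition.FulfillsR p u) (huq : PointPartition.FulfillsR q u) :
    ∃ V : Matrix (Fin n) (Fin n) A, Matrix.of u * V = 1 ∧ V * Matrix.of u = 1 :=
  invertible_of_fulfillsR_general p hp_ns q hq_ns u hsa hup huq
end

section
/- Let C be a generalized category of partitions, let p ∈ P(0,l) with p ∈ C, and let q ∈ P(k,0) with q ∈ C and q* ∈ C such that q* is not the tensor power of k lower singletons (i.e., q has a block of size at least two). Then every line rotated version of p belongs to C. -/
open scoped BigOperators

/-- A partition with `k` upper and `l` lower points, encoded as an equivalence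
relation on the disjoint union of the points; the blocks of the partition are
the equivalence classes. -/
abbrev CatPartition (k l : ℕ) := Setoid (Fin k ⊕ Fin l)

namespace CatPartition

/-- `DeltaCond p α β` holds iff `δ_p(α,β) = 1`, i.e. the labelling of the upper
points by `α` and of the lower points by `β` is constant on every block of `p`. -/
def DeltaCond {k l n : ℕ} (p : CatPartition k l) (α : Fin k → Fin n) (β : Fin l → Fin n) : Prop :=
  ∀ x y : Fin k ⊕ Fin l, p.r x y → Sum.elim α β x = Sum.elim α β y

/-- The ordered product `u_{γ₁α₁} ⋯ u_{γ_mα_m}`. -/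
def uProd {m n : ℕ} {A : Type*} [Monoid A] (u : Fin n → Fin n → A) (γ α : Fin m → Fin n) : A :=
  (List.ofFn fun i : Fin m => u (γ i) (α i)).prod

open Classical in
/-- The elements `u i j` fulfill the relations `R(p)` associated to the partition `p`. -/
def FulfillsR {k l n : ℕ} {A : Type*} [Ring A] (p : CatPartition k l) (u : Fin n → Fin n → A) :
    Prop :=
  ∀ (α : Fin k → Fin n) (β : Fin l → Fin n),
    (∑ γ : Fin k → Fin n, if DeltaCond p γ β then uProd u γ α else 0)
      = ∑ γ' : Fin l → Fin n, if DeltaCond p α γ' then uProd u β γ' else 0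

end CatPartition
namespace CatPartition

/-- The disjoint sum of two setoids. -/
protected def sumSetoid {α β : Type*} (s : Setoid α) (t : Setoid β) : Setoid (α ⊕ β) :=
  Setoid.ker (Sum.map (Quotient.mk s) (Quotient.mk t))

/-- The tensor product (horizontal concatenation) of two partitions. -/
def tensorPart {k l k' l' : ℕ} (p : CatPartition k l) (q : CatPartition k' l') :
    CatPartition (k + k') (l + l') :=
  Setoid.comap
    (Sum.elim
      (fun a : Fin (k + k') =>
        (Sum.map (Sum.inl : Fin k → Fin k ⊕ Fin l) (Sum.inl : Fin k' → Fin k' ⊕ Fin l')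
          (finSumFinEquiv.symm a)))
      (fun b : Fin (l + l') =>
        (Sum.map (Sum.inr : Fin l → Fin k ⊕ Fin l) (Sum.inr : Fin l' → Fin k' ⊕ Fin l')
          (finSumFinEquiv.symm b))))
    (CatPartition.sumSetoid p q)

/-- The composition `qp ∈ P(k,m)` of `p ∈ P(k,l)` with `q ∈ P(l,m)`: the lower points
of `p` are identified with the upper points of `q`, blocks that become connected are
joined, and the middle points are deleted. -/
def compPart {k l m : ℕ} (q : CatPartition l m) (p : CatPartition k l) : CatPartition k m :=
  Setoid.comap (Sum.map (id : Fin k → Fin k) (Sum.inr : Fin m → Fin l ⊕ Fin m))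
    ((Setoid.ker fun x : Fin k ⊕ (Fin l ⊕ Fin m) =>
        Sum.map (Quotient.mk p) (id : Fin m → Fin m)
          ((Equiv.sumAssoc (Fin k) (Fin l) (Fin m)).symm x))
      ⊔ Setoid.ker (Sum.map (id : Fin k → Fin k) (Quotient.mk q)))

/-- The vertical reflection of a partition: the left-to-right order of the upper points
and of the lower points is reversed. -/
def reflPart {k l : ℕ} (p : CatPartition k l) : CatPartition k l :=
  Setoid.comap (Sum.map (Fin.rev : Fin k → Fin k) (Fin.rev : Fin l → Fin l)) p

/-- The involution `p* ∈ P(l,k)` of `p ∈ P(k,l)`: upper and lower points are interchanged. -/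
def invPart {k l : ℕ} (p : CatPartition k l) : CatPartition l k :=
  Setoid.comap (Sum.swap : Fin l ⊕ Fin k → Fin k ⊕ Fin l) p

/-- The `r`-fold tensor power of the identity partition: the `i`-th upper point is
connected to the `i`-th lower point. In particular `idPow 1` is the identity partition. -/
def idPow (r : ℕ) : CatPartition r r := Setoid.ker (Sum.elim (id : Fin r → Fin r) id)

/-- Transport a partition along equalities of the numbers of points. -/
def castPart {k l k' l' : ℕ} (hk : k = k') (hl : l = l') (p : CatPartition k l) :
    CatPartition k' l' :=
  Setoid.comap (Sum.map (Fin.cast hk.symm) (Fin.cast hl.symm)) p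

/-- The partition `b_m ∈ P(0,m)` whose single block consists of all `m` lower points. -/
def bm (m : ℕ) : CatPartition 0 m := ⊤

end CatPartition
/-- A generalized category of partitions: it contains the identity partition and is
closed under tensor products, compositions and vertical reflections. -/
structure IsGenCategory (C : ∀ k l : ℕ, Set (CatPartition k l)) : Prop where
  id_mem : CatPartition.idPow 1 ∈ C 1 1
  tensor_mem : ∀ {k l k' l' : ℕ} (p : CatPartition k l) (q : CatPartition k' l'),
      p ∈ C k l → q ∈ C k' l' → CatPartition.tensorPart p q ∈ C (k + k') (l + l')
  comp_mem : ∀ {k l m : ℕ} (p : CatPartition k l) (q : CatPartition l m),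
      p ∈ C k l → q ∈ C l m → CatPartition.compPart q p ∈ C k m
  refl_mem : ∀ {k l : ℕ} (p : CatPartition k l), p ∈ C k l → CatPartition.reflPart p ∈ C k l

namespace CatPartition

/-- `p'` is a line rotated version of `p ∈ P(0,l)`: for all `2 ≤ i < j ≤ l` the points
`i` and `j` lie in the same block of `p` iff `i-1` and `j-1` lie in the same block of
`p'`, and for all `2 ≤ j ≤ l` the points `1` and `j` lie in the same block of `p` iff
`j-1` and `l` lie in the same block of `p'` (here points are labelled `1,…,l`). -/
def IsLineRotated {l : ℕ} (p p' : CatPartition 0 l) : Prop :=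
  (∀ i j : Fin l, 0 < (i : ℕ) → (i : ℕ) < (j : ℕ) →
      (p.r (Sum.inr i) (Sum.inr j) ↔
        p'.r (Sum.inr ⟨(i : ℕ) - 1, lt_of_le_of_lt (Nat.sub_le _ _) i.isLt⟩)
          (Sum.inr ⟨(j : ℕ) - 1, lt_of_le_of_lt (Nat.sub_le _ _) j.isLt⟩)))
  ∧ ∀ j : Fin l, 0 < (j : ℕ) →
      (p.r (Sum.inr ⟨0, Nat.lt_of_le_of_lt (Nat.zero_le _) j.isLt⟩) (Sum.inr j) ↔
        p'.r (Sum.inr ⟨(j : ℕ) - 1, lt_of_le_of_lt (Nat.sub_le _ _) j.isLt⟩)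
          (Sum.inr ⟨l - 1, Nat.sub_lt (Nat.lt_of_le_of_lt (Nat.zero_le _) j.isLt) Nat.one_pos⟩))

end CatPartition

/-!
Let `w ∈ P(0, m+1)` and `v ∈ P(K+1, 0)` with `v, v* ∈ C`. Stack the cup `v*`, then
`id_K ⊗ w ⊗ id_1`, then the cap `v ⊗ id_{m+1}`. The cap joins the first point of `w` to the cup
points in the block of the last point of `v`, and the cup joins these to its last point, which
sits at the right end. Hence the result is the rotation of `w` whenever the first point of `w` is
a singleton or the last point of `v` lies in a block of size at least two.

Rotations of the first kind, with `v = q`, move the first point of a nontrivial block of `q*` to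
the front. The partitions whose involution lies in `C` form a generalized category as well, so
such a rotation `w` of `q*` has `w, w* ∈ C`, and the reflection of `w*` is a `v` of the second
kind, with which `p` can be rotated.
-/

namespace CatPartition

instance : Subsingleton (CatPartition 0 0) :=
  ⟨fun _ _ => Setoid.ext fun x => x.elim Fin.elim0 Fin.elim0⟩

section SumSetoid

variable {α β : Type*} (s : Setoid α) (t : Setoid β)

@[simp]
theorem sumSetoid_inl_inl (a b : α) : CatPartition.sumSetoid s t (.inl a) (.inl b) ↔ s a b := by
  unfold CatPartition.sumSetoid; rw [Setoid.ker_def]; simp [Quotient.eq]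

@[simp]
theorem sumSetoid_inr_inr (a b : β) : CatPartition.sumSetoid s t (.inr a) (.inr b) ↔ t a b := by
  unfold CatPartition.sumSetoid; rw [Setoid.ker_def]; simp [Quotient.eq]

@[simp]
theorem sumSetoid_inl_inr (a : α) (b : β) : ¬ CatPartition.sumSetoid s t (.inl a) (.inr b) := by
  unfold CatPartition.sumSetoid; rw [Setoid.ker_def]; simp

@[simp]
theorem sumSetoid_inr_inl (a : β) (b : α) : ¬ CatPartition.sumSetoid s t (.inr a) (.inl b) := by
  unfold CatPartition.sumSetoid; rw [Setoid.ker_def]; simp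

end SumSetoid

section Tensor

variable {k l k' l' : ℕ} (p : CatPartition k l) (q : CatPartition k' l')

def tensorSplit : Fin (k + k') ⊕ Fin (l + l') → (Fin k ⊕ Fin l) ⊕ (Fin k' ⊕ Fin l') :=
  Sum.elim (fun a => Sum.map Sum.inl Sum.inl (finSumFinEquiv.symm a))
    (fun b => Sum.map Sum.inr Sum.inr (finSumFinEquiv.symm b))

theorem tensorPart_apply (x y : Fin (k + k') ⊕ Fin (l + l')) :
    tensorPart p q x y ↔ CatPartition.sumSetoid p q (tensorSplit x) (tensorSplit y) :=
  Iff.rfl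

@[simp]
theorem tensorSplit_inl_castAdd (i : Fin k) :
    tensorSplit (k' := k') (l := l) (l' := l') (.inl (Fin.castAdd k' i)) = .inl (.inl i) := by
  simp [tensorSplit]

@[simp]
theorem tensorSplit_inl_natAdd (i : Fin k') :
    tensorSplit (k := k) (l := l) (l' := l') (.inl (Fin.natAdd k i)) = .inr (.inl i) := by
  simp [tensorSplit]

@[simp]
theorem tensorSplit_inr_castAdd (j : Fin l) :
    tensorSplit (k := k) (k' := k') (l' := l') (.inr (Fin.castAdd l' j)) = .inl (.inr j) := by
  simp [tensorSplit]

@[simp]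
theorem tensorSplit_inr_natAdd (j : Fin l') :
    tensorSplit (k := k) (k' := k') (l := l) (.inr (Fin.natAdd l j)) = .inr (.inr j) := by
  simp [tensorSplit]

theorem tensorPart_of_left {x y : Fin k ⊕ Fin l} (h : p x y) :
    tensorPart p q (Sum.map (Fin.castAdd k') (Fin.castAdd l') x)
      (Sum.map (Fin.castAdd k') (Fin.castAdd l') y) := by
  rcases x with x | x <;> rcases y with y | y <;> simpa [tensorPart_apply] using h

theorem tensorPart_of_right {x y : Fin k' ⊕ Fin l'} (h : q x y) :
    tensorPart p q (Sum.map (Fin.natAdd k) (Fin.natAdd l) x)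
      (Sum.map (Fin.natAdd k) (Fin.natAdd l) y) := by
  rcases x with x | x <;> rcases y with y | y <;> simpa [tensorPart_apply] using h

theorem tensorPart_le_ker {L : Type*} {f : Fin (k + k') ⊕ Fin (l + l') → L}
    (hp : p ≤ Setoid.ker (f ∘ Sum.map (Fin.castAdd k') (Fin.castAdd l')))
    (hq : q ≤ Setoid.ker (f ∘ Sum.map (Fin.natAdd k) (Fin.natAdd l))) :
    tensorPart p q ≤ Setoid.ker f := by
  have left_or_right : ∀ x : Fin (k + k') ⊕ Fin (l + l'),
      (∃ a, x = Sum.map (Fin.castAdd k') (Fin.castAdd l') a) ∨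
        ∃ b, x = Sum.map (Fin.natAdd k) (Fin.natAdd l) b := by
    rintro (i | i) <;> induction i using Fin.addCases <;> simp
  intro x y h
  rw [tensorPart_apply] at h
  rcases left_or_right x with ⟨a, rfl⟩ | ⟨a, rfl⟩ <;>
    rcases left_or_right y with ⟨b, rfl⟩ | ⟨b, rfl⟩ <;>
    rcases a with a | a <;> rcases b with b | b <;> simp at h
  all_goals first | exact hp h | exact hq h

end Tensor

theorem idPow_apply {r : ℕ} (x y : Fin r ⊕ Fin r) :
    idPow r x y ↔ Sum.elim id id x = Sum.elim id id y :=
  Iff.rfl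

theorem idPow_le_ker {r : ℕ} {L : Type*} {f : Fin r ⊕ Fin r → L}
    (hf : ∀ i, f (.inl i) = f (.inr i)) : idPow r ≤ Setoid.ker f := by
  rintro (i | i) (j | j) (h : _ = _) <;> simp only [Sum.elim_inl, Sum.elim_inr, id] at h <;>
    subst h <;> simp [Setoid.ker_def, hf]

theorem tensorPart_idPow_one (r : ℕ) : tensorPart (idPow r) (idPow 1) = idPow (r + 1) := by
  ext x y
  rw [tensorPart_apply, idPow_apply]
  rcases x with i | i <;> rcases y with j | j <;>
    induction i using Fin.addCases <;> induction j using Fin.addCases <;>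
    simp [idPow_apply, Fin.ext_iff] <;> omega

theorem castPart_apply {k l k' l' : ℕ} (hk : k = k') (hl : l = l') (p : CatPartition k l)
    (x y : Fin k' ⊕ Fin l') :
    castPart hk hl p x y ↔
      p (Sum.map (Fin.cast hk.symm) (Fin.cast hl.symm) x)
        (Sum.map (Fin.cast hk.symm) (Fin.cast hl.symm) y) :=
  Iff.rfl

theorem castPart_le_ker {k l k' l' : ℕ} (hk : k = k') (hl : l = l') {p : CatPartition k l}
    {L : Type*} {f : Fin k' ⊕ Fin l' → L}
    (hp : p ≤ Setoid.ker (f ∘ Sum.map (Fin.cast hk) (Fin.cast hl))) :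
    castPart hk hl p ≤ Setoid.ker f := by
  subst hk hl
  intro x y h
  simpa [Setoid.ker_def] using hp h

@[simp]
theorem invPart_apply {k l : ℕ} (p : CatPartition k l) (x y : Fin l ⊕ Fin k) :
    invPart p x y ↔ p x.swap y.swap :=
  Iff.rfl

@[simp]
theorem invPart_invPart {k l : ℕ} (p : CatPartition k l) : invPart (invPart p) = p := by
  ext x y; simp

theorem invPart_reflPart {k l : ℕ} (p : CatPartition k l) :
    invPart (reflPart p) = reflPart (invPart p) := by
  ext (x | x) (y | y) <;> rfl

theorem invPart_idPow (r : ℕ) : invPart (idPow r) = idPow r := by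
  ext (x | x) (y | y) <;> simp [idPow_apply]

theorem invPart_tensorPart {k l k' l' : ℕ} (p : CatPartition k l) (q : CatPartition k' l') :
    invPart (tensorPart p q) = tensorPart (invPart p) (invPart q) := by
  ext x y
  rw [invPart_apply, tensorPart_apply, tensorPart_apply]
  rcases x with i | i <;> rcases y with j | j <;>
    induction i using Fin.addCases <;> induction j using Fin.addCases <;> simp

section Comp

variable {a b c : ℕ} (P : CatPartition a b) (Q : CatPartition b c)

def stackSetoid : Setoid (Fin a ⊕ (Fin b ⊕ Fin c)) :=
  (Setoid.ker fun x => Sum.map (Quotient.mk P) id ((Equiv.sumAssoc _ _ _).symm x)) ⊔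
    Setoid.ker (Sum.map id (Quotient.mk Q))

theorem compPart_apply (x y : Fin a ⊕ Fin c) :
    compPart Q P x y ↔ stackSetoid P Q (Sum.map id .inr x) (Sum.map id .inr y) :=
  Iff.rfl

variable {P Q}

theorem stackSetoid_of_top {x y : Fin a ⊕ Fin b} (h : P x y) :
    stackSetoid P Q (Sum.map id .inl x) (Sum.map id .inl y) := by
  apply le_sup_left (b := Setoid.ker (Sum.map id (Quotient.mk Q)))
  rcases x with x | x <;> rcases y with y | y <;> simpa [Setoid.ker_def, Quotient.eq] using h

theorem stackSetoid_of_bottom {x y : Fin b ⊕ Fin c} (h : Q x y) :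
    stackSetoid P Q (.inr x) (.inr y) := by
  apply le_sup_right
    (a := Setoid.ker fun x => Sum.map (Quotient.mk P) id ((Equiv.sumAssoc _ _ _).symm x))
  simpa [Setoid.ker_def, Quotient.eq] using h

theorem compPart_le_ker {L : Type*} {ν : Fin a → L} {κ : Fin b → L} {μ : Fin c → L}
    (hP : P ≤ Setoid.ker (Sum.elim ν κ)) (hQ : Q ≤ Setoid.ker (Sum.elim κ μ)) :
    compPart Q P ≤ Setoid.ker (Sum.elim ν μ) := by
  have h : stackSetoid P Q ≤ Setoid.ker (Sum.elim ν (Sum.elim κ μ)) := by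
    refine sup_le ?_ ?_
    · rintro (x | x | x) (y | y | y) h <;>
        simp [Setoid.ker_def, Quotient.eq] at h ⊢ <;> first | exact hP h | simp [h]
    · rintro (x | x) (y | y) h <;>
        simp [Setoid.ker_def, Quotient.eq] at h ⊢ <;> first | exact hQ h | simp [h]
  rintro (x | x) (y | y) hxy <;> exact h hxy

end Comp

theorem _root_.Setoid.comap_equiv_sup {α β : Type*} (e : α ≃ β) (r s : Setoid β) :
    (r ⊔ s).comap e = r.comap e ⊔ s.comap e := by
  refine le_antisymm ?_
    (sup_le (fun x y h => le_sup_left (b := s) h) (fun x y h => le_sup_right (a := r) h))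
  have h : r ⊔ s ≤ (r.comap e ⊔ s.comap e).comap e.symm :=
    sup_le (fun x y h => le_sup_left (b := s.comap e) (by simpa [Setoid.comap_rel] using h))
      (fun x y h => le_sup_right (a := r.comap e) (by simpa [Setoid.comap_rel] using h))
  intro x y hxy
  simpa [Setoid.comap_rel] using h hxy

theorem stackSetoid_invPart {a b c : ℕ} (P : CatPartition a b) (Q : CatPartition b c) :
    stackSetoid (invPart Q) (invPart P) =
      (stackSetoid P Q).comap ((Equiv.sumComm _ _).trans
        ((Equiv.sumCongr (Equiv.sumComm _ _) (Equiv.refl _)).trans (Equiv.sumAssoc _ _ _))) := by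
  rw [stackSetoid, stackSetoid, Setoid.comap_equiv_sup, sup_comm]
  congr 1 <;> ext (x | x | x) (y | y | y) <;> simp [Setoid.ker_def, Quotient.eq]

theorem invPart_compPart {a b c : ℕ} (P : CatPartition a b) (Q : CatPartition b c) :
    invPart (compPart Q P) = compPart (invPart P) (invPart Q) := by
  ext x y
  rw [compPart_apply, stackSetoid_invPart, Setoid.comap_rel, invPart_apply, compPart_apply]
  rcases x with x | x <;> rcases y with y | y <;> rfl

def IsSingleton {k l : ℕ} (p : CatPartition k l) (x : Fin k ⊕ Fin l) : Prop :=
  ∀ y, p x y → y = x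

theorem isSingleton_comap {k l k' l' : ℕ} (e : Fin k ⊕ Fin l ≃ Fin k' ⊕ Fin l')
    (p : CatPartition k' l') (x : Fin k ⊕ Fin l) :
    IsSingleton (Setoid.comap e p) x ↔ p.IsSingleton (e x) := by
  constructor
  · intro h y hy
    obtain ⟨y, rfl⟩ := e.surjective y
    rw [h y hy]
  · exact fun h y hy => e.injective (h _ hy)

def rotate {m : ℕ} (w : CatPartition 0 m) : CatPartition 0 m :=
  Setoid.comap (Equiv.sumCongr (Equiv.refl _) (finRotate m)) w

@[simp]
theorem rotate_apply {m : ℕ} (w : CatPartition 0 m) (x y : Fin m) :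
    rotate w (.inr x) (.inr y) ↔ w (.inr (finRotate m x)) (.inr (finRotate m y)) :=
  Iff.rfl

theorem IsLineRotated.eq_rotate {m : ℕ} {p p' : CatPartition 0 (m + 1)}
    (h : IsLineRotated p p') : p' = rotate p := by
  obtain ⟨hmid, hend⟩ := h
  have key : ∀ a b : Fin (m + 1), a < b →
      (p' (.inr a) (.inr b) ↔ p (.inr (a + 1)) (.inr (b + 1))) := by
    intro a b hab
    have ha : ((a + 1 : Fin (m + 1)) : ℕ) = a + 1 :=
      Fin.val_add_one_of_lt (lt_of_lt_of_le hab (Fin.le_last _))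
    by_cases hb : b = Fin.last m
    · subst hb
      rw [Fin.last_add_one]
      convert (hend (a + 1) (by omega)).symm.trans ⟨p.symm, p.symm⟩ using 3
      · ext; simp [ha]
      · ext; simp
      · rfl
    · have hb : ((b + 1 : Fin (m + 1)) : ℕ) = b + 1 :=
        Fin.val_add_one_of_lt (Fin.lt_last_iff_ne_last.mpr hb)
      convert (hmid (a + 1) (b + 1) (by omega) (by omega)).symm using 3
      · ext; simp [ha]
      · ext; simp [hb]
  ext (a | a) (b | b)
  all_goals first | exact a.elim0 | exact b.elim0 | skip
  rw [rotate_apply, finRotate_apply, finRotate_apply]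
  rcases lt_trichotomy a b with hab | rfl | hab
  · exact key a b hab
  · exact iff_of_true (p'.refl _) (p.refl _)
  · exact ⟨fun h => p.symm ((key b a hab).mp (p'.symm h)),
      fun h => p'.symm ((key b a hab).mpr (p.symm h))⟩

end CatPartition

namespace IsGenCategory

open CatPartition

variable {C : ∀ k l : ℕ, Set (CatPartition k l)}

theorem castPart_mem {k l k' l' : ℕ} (hk : k = k') (hl : l = l') {p : CatPartition k l}
    (hp : p ∈ C k l) : castPart hk hl p ∈ C k' l' := by
  subst hk hl
  rwa [show castPart rfl rfl p = p by ext (x | x) (y | y) <;> rfl]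

theorem idPow_mem (hC : IsGenCategory C) {n : ℕ} {u : CatPartition n 0} {u' : CatPartition 0 n}
    (hu : u ∈ C n 0) (hu' : u' ∈ C 0 n) (r : ℕ) : idPow r ∈ C r r := by
  induction r with
  | zero => exact Subsingleton.elim (compPart u u') (idPow 0) ▸ hC.comp_mem _ _ hu' hu
  | succ r ih => exact tensorPart_idPow_one r ▸ hC.tensor_mem _ _ ih hC.id_mem

theorem invPart_preimage (hC : IsGenCategory C) :
    IsGenCategory fun k l => {p | invPart p ∈ C l k} where
  id_mem := by simpa [invPart_idPow] using hC.id_mem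
  tensor_mem p q hp hq := by simpa [invPart_tensorPart] using hC.tensor_mem _ _ hp hq
  comp_mem p q hp hq := by simpa [invPart_compPart] using hC.comp_mem _ _ hq hp
  refl_mem p hp := by simpa [invPart_reflPart] using hC.refl_mem _ hp

end IsGenCategory

namespace CatPartition

section RotateVia

variable {K m : ℕ}

def insertLayer (K : ℕ) (w : CatPartition 0 (m + 1)) :
    CatPartition (K + 1) ((K + (m + 1)) + 1) :=
  tensorPart (tensorPart (idPow K) w) (idPow 1)

def capLayer (m : ℕ) (v : CatPartition (K + 1) 0) :
    CatPartition ((K + (m + 1)) + 1) (m + 1) :=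
  castPart (by omega) (zero_add _) (tensorPart v (idPow (m + 1)))

def cupInsert (w : CatPartition 0 (m + 1)) (v : CatPartition (K + 1) 0) :
    CatPartition 0 ((K + (m + 1)) + 1) :=
  compPart (insertLayer K w) (invPart v)

def rotateVia (w : CatPartition 0 (m + 1)) (v : CatPartition (K + 1) 0) :
    CatPartition 0 (m + 1) :=
  compPart (capLayer m v) (cupInsert w v)

variable (w : CatPartition 0 (m + 1)) (v : CatPartition (K + 1) 0)

open Classical in
/-- The block of the first point of `w` gets the label of the block of the last point of `v`,
to which the cap and the cup attach it. -/
noncomputable def rotLabel (x : Fin (m + 1)) : Quotient w ⊕ Quotient v :=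
  if w (.inr 0) (.inr x) then .inr ⟦.inl (Fin.last K)⟧ else .inl ⟦.inr x⟧

/-- Labels of the middle row of `rotateVia w v`, indexed by position so that they apply to both
`Fin ((K + (m + 1)) + 1)` and `Fin ((K + 1) + (m + 1))`. -/
noncomputable def midLabel (n : ℕ) : Quotient w ⊕ Quotient v :=
  if h : n < K then .inr ⟦.inl ⟨n, by omega⟩⟧
  else if h' : n - K < m + 1 then rotLabel w v ⟨n - K, h'⟩
  else .inr ⟦.inl (Fin.last K)⟧

theorem rotLabel_zero : rotLabel w v 0 = .inr ⟦.inl (Fin.last K)⟧ := by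
  simp [rotLabel, Setoid.refl]

theorem rotLabel_eq_iff (x y : Fin (m + 1)) :
    rotLabel w v x = rotLabel w v y ↔ w (.inr x) (.inr y) := by
  unfold rotLabel
  by_cases hx : w (.inr 0) (.inr x) <;> by_cases hy : w (.inr 0) (.inr y) <;>
    simp only [hx, hy, if_true, if_false, reduceCtorEq, Sum.inl.injEq, Quotient.eq, false_iff,
      true_iff]
  · exact w.trans (w.symm hx) hy
  · exact fun h => hy (w.trans hx h)
  · exact fun h => hx (w.trans hy (w.symm h))

theorem midLabel_val (i : Fin (K + 1)) : midLabel w v i = .inr ⟦.inl i⟧ := by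
  unfold midLabel
  split_ifs with h h'
  · rfl
  · obtain rfl : i = Fin.last K := Fin.ext (by simp; omega)
    simpa using rotLabel_zero w v
  · omega

theorem midLabel_add (x : Fin (m + 1)) : midLabel w v (K + x) = rotLabel w v x := by
  unfold midLabel
  rw [dif_neg (by omega), dif_pos (by omega)]
  simp

theorem midLabel_of_le {n : ℕ} (h : K + (m + 1) ≤ n) :
    midLabel w v n = .inr ⟦.inl (Fin.last K)⟧ := by
  unfold midLabel
  rw [dif_neg (by omega), dif_neg (by omega)]

theorem invPart_le_ker_midLabel :
    invPart v ≤ Setoid.ker (Sum.elim Fin.elim0 fun i : Fin (K + 1) => midLabel w v i) := by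
  rintro (x | x) (y | y) h
  all_goals first | exact x.elim0 | exact y.elim0 | skip
  simpa [Setoid.ker_def, midLabel_val, Quotient.eq] using h

theorem insertLayer_le_ker_midLabel :
    insertLayer K w ≤ Setoid.ker (Sum.elim (fun i : Fin (K + 1) => midLabel w v i)
      fun n : Fin ((K + (m + 1)) + 1) => midLabel w v n) := by
  refine tensorPart_le_ker _ _ (tensorPart_le_ker _ _ (idPow_le_ker fun i => by simp) ?_)
    (idPow_le_ker fun i => ?_)
  · rintro (x | x) (y | y) h
    all_goals first | exact x.elim0 | exact y.elim0 | skip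
    simpa [Setoid.ker_def, midLabel_add, rotLabel_eq_iff] using h
  · have hK := midLabel_val w v (Fin.last K)
    rw [Fin.val_last] at hK
    obtain rfl : i = 0 := Subsingleton.elim _ _
    simpa [midLabel_of_le] using hK

theorem capLayer_le_ker_midLabel :
    capLayer m v ≤ Setoid.ker (Sum.elim (fun n : Fin ((K + (m + 1)) + 1) => midLabel w v n)
      fun x => rotLabel w v (finRotate _ x)) := by
  refine castPart_le_ker _ _ (tensorPart_le_ker _ _ ?_ (idPow_le_ker fun x => ?_))
  · rintro (i | i) (j | j) h
    all_goals first | exact i.elim0 | exact j.elim0 | skip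
    simpa [Setoid.ker_def, midLabel_val] using Quotient.sound h
  · simp only [Function.comp_apply, Sum.map_inl, Sum.map_inr, Sum.elim_inl, Sum.elim_inr,
      Fin.val_cast, Fin.val_natAdd, Fin.natAdd_zero, Fin.cast_cast, Fin.cast_eq_self,
      finRotate_apply]
    by_cases hx : x = Fin.last m
    · rw [hx, Fin.last_add_one, rotLabel_zero, midLabel_of_le w v (by simp; omega)]
    · rw [← midLabel_add, Fin.val_add_one_of_lt (Fin.lt_last_iff_ne_last.mpr hx), add_assoc,
        add_comm 1]

theorem rotateVia_le_rotate : rotateVia w v ≤ rotate w := by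
  rintro (x | x) (y | y) h
  all_goals first | exact x.elim0 | exact y.elim0 | skip
  have := compPart_le_ker (compPart_le_ker (invPart_le_ker_midLabel w v)
    (insertLayer_le_ker_midLabel w v)) (capLayer_le_ker_midLabel w v) h
  simpa [Setoid.ker_def, rotLabel_eq_iff] using this

theorem insertLayer_of_rel {x y : Fin (m + 1)} (h : w (.inr x) (.inr y)) :
    insertLayer K w (.inr (Fin.castAdd 1 (Fin.natAdd K x)))
      (.inr (Fin.castAdd 1 (Fin.natAdd K y))) :=
  tensorPart_of_left _ _ (x := .inr _) (y := .inr _) (tensorPart_of_right _ _ h)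

theorem insertLayer_castSucc (α : Fin K) :
    insertLayer K w (.inl α.castSucc) (.inr (Fin.castAdd 1 (Fin.castAdd (m + 1) α))) :=
  tensorPart_of_left _ _ (x := .inl _) (y := .inr _)
    (tensorPart_of_left _ _ (x := .inl α) (y := .inr α) rfl)

theorem insertLayer_last : insertLayer K w (.inl (Fin.last K)) (.inr (Fin.last _)) :=
  tensorPart_of_right _ _ (x := .inl 0) (y := .inr 0) rfl

theorem cupInsert_of_rel {x y : Fin (m + 1)} (h : w (.inr x) (.inr y)) :
    cupInsert w v (.inr (Fin.castAdd 1 (Fin.natAdd K x)))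
      (.inr (Fin.castAdd 1 (Fin.natAdd K y))) :=
  stackSetoid_of_bottom (insertLayer_of_rel w h)

theorem cupInsert_castSucc_last {α : Fin K} (h : v (.inl (Fin.last K)) (.inl α.castSucc)) :
    cupInsert w v (.inr (Fin.castAdd 1 (Fin.castAdd (m + 1) α))) (.inr (Fin.last _)) := by
  have hcup : invPart v (.inr α.castSucc) (.inr (Fin.last K)) := v.symm h
  rw [cupInsert, compPart_apply]
  exact (stackSetoid _ _).trans
    (stackSetoid_of_bottom ((insertLayer K w).symm (insertLayer_castSucc w α)))
    ((stackSetoid _ _).trans (stackSetoid_of_top hcup)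
      (stackSetoid_of_bottom (insertLayer_last w)))

theorem capLayer_strand (x : Fin (m + 1)) {n : Fin ((K + (m + 1)) + 1)}
    (hn : (n : ℕ) = K + 1 + x) : capLayer m v (.inl n) (.inr x) := by
  have e : Fin.cast (by omega) n = Fin.natAdd (K + 1) x := Fin.ext (by simp [hn])
  have e' : Fin.cast (zero_add _).symm x = Fin.natAdd 0 x := Fin.ext (by simp)
  rw [capLayer, castPart_apply, Sum.map_inl, Sum.map_inr, e, e']
  exact tensorPart_of_right _ _ (x := .inl x) (y := .inr x) rfl

theorem capLayer_of_rel {i j : Fin (K + 1)} {a b : Fin ((K + (m + 1)) + 1)}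
    (ha : (a : ℕ) = i) (hb : (b : ℕ) = j) (h : v (.inl i) (.inl j)) :
    capLayer m v (.inl a) (.inl b) := by
  have ea : Fin.cast (by omega) a = Fin.castAdd (m + 1) i := Fin.ext (by simp [ha])
  have eb : Fin.cast (by omega) b = Fin.castAdd (m + 1) j := Fin.ext (by simp [hb])
  rw [capLayer, castPart_apply, Sum.map_inl, Sum.map_inl, ea, eb]
  exact tensorPart_of_left _ _ (x := .inl i) (y := .inl j) h

theorem stackSetoid_strand {x : Fin (m + 1)} (hx : x ≠ Fin.last m) :
    stackSetoid (cupInsert w v) (capLayer m v)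
      (.inr (.inl (Fin.castAdd 1 (Fin.natAdd K (x + 1))))) (.inr (.inr x)) := by
  have hx1 := Fin.val_add_one_of_lt (Fin.lt_last_iff_ne_last.mpr hx)
  exact stackSetoid_of_bottom (capLayer_strand v x (by simp [hx1]; omega))

theorem rotateVia_of_rel {x y : Fin (m + 1)} (hx : x ≠ Fin.last m) (hy : y ≠ Fin.last m)
    (h : w (.inr (x + 1)) (.inr (y + 1))) : rotateVia w v (.inr x) (.inr y) :=
  (stackSetoid _ _).trans ((stackSetoid _ _).symm (stackSetoid_strand w v hx))
    ((stackSetoid _ _).trans (stackSetoid_of_top (cupInsert_of_rel w v h))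
      (stackSetoid_strand w v hy))

/-- The path from `x` to the last point runs through `w`, the cap `v`, and the cup `v*`. -/
theorem rotateVia_last {x : Fin (m + 1)} (hx : x ≠ Fin.last m) (h : w (.inr (x + 1)) (.inr 0))
    {α : Fin K} (hα : v (.inl (Fin.last K)) (.inl α.castSucc)) :
    rotateVia w v (.inr x) (.inr (Fin.last m)) := by
  have cap : stackSetoid (cupInsert w v) (capLayer m v)
      (.inr (.inl (Fin.castAdd 1 (Fin.natAdd K 0))))
      (.inr (.inl (Fin.castAdd 1 (Fin.castAdd (m + 1) α)))) :=
    stackSetoid_of_bottom (capLayer_of_rel v (by simp) (by simp) hα)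
  have last : stackSetoid (cupInsert w v) (capLayer m v)
      (.inr (.inl (Fin.last _))) (.inr (.inr (Fin.last m))) :=
    stackSetoid_of_bottom (capLayer_strand v _ (by simp; omega))
  exact (stackSetoid _ _).trans ((stackSetoid _ _).symm (stackSetoid_strand w v hx))
    ((stackSetoid _ _).trans (stackSetoid_of_top (cupInsert_of_rel w v h))
      ((stackSetoid _ _).trans cap
        ((stackSetoid _ _).trans (stackSetoid_of_top (cupInsert_castSucc_last w v hα)) last)))

theorem exists_castSucc_of_not_isSingleton (h : ¬ v.IsSingleton (.inl (Fin.last K))) :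
    ∃ α : Fin K, v (.inl (Fin.last K)) (.inl α.castSucc) := by
  simp only [IsSingleton, not_forall] at h
  obtain ⟨(β | β), hβ, hne⟩ := h
  · obtain ⟨α, rfl⟩ := Fin.exists_castSucc_eq.mpr (fun h => hne (h ▸ rfl))
    exact ⟨α, hβ⟩
  · exact β.elim0

theorem rotateVia_of_ne_last
    (hsing : ¬ w.IsSingleton (.inr 0) → ¬ v.IsSingleton (.inl (Fin.last K)))
    {x y : Fin (m + 1)} (hx : x ≠ Fin.last m) (h : w (.inr (x + 1)) (.inr (y + 1))) :
    rotateVia w v (.inr x) (.inr y) := by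
  by_cases hy : y = Fin.last m
  · subst hy
    rw [Fin.last_add_one] at h
    have hx1 := Fin.val_add_one_of_lt (Fin.lt_last_iff_ne_last.mpr hx)
    have hw0 : ¬ w.IsSingleton (.inr 0) := fun hs =>
      absurd (congrArg Fin.val (Sum.inr_injective (hs _ (w.symm h)))) (by rw [hx1]; simp)
    obtain ⟨α, hα⟩ := exists_castSucc_of_not_isSingleton v (hsing hw0)
    exact rotateVia_last w v hx h hα
  · exact rotateVia_of_rel w v hx hy h

theorem rotate_le_rotateVia
    (hsing : ¬ w.IsSingleton (.inr 0) → ¬ v.IsSingleton (.inl (Fin.last K))) :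
    rotate w ≤ rotateVia w v := by
  rintro (x | x) (y | y) h
  all_goals first | exact x.elim0 | exact y.elim0 | skip
  rw [rotate_apply, finRotate_apply, finRotate_apply] at h
  by_cases hx : x = Fin.last m
  · by_cases hy : y = Fin.last m
    · subst hx hy
      exact (rotateVia w v).refl _
    · exact (rotateVia w v).symm (rotateVia_of_ne_last w v hsing hy (w.symm h))
  · exact rotateVia_of_ne_last w v hsing hx h

end RotateVia

end CatPartition

namespace IsGenCategory

open CatPartition

variable {C : ∀ k l : ℕ, Set (CatPartition k l)}

theorem rotate_mem (hC : IsGenCategory C) {K m : ℕ} {w : CatPartition 0 (m + 1)}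
    (hw : w ∈ C 0 (m + 1)) {v : CatPartition (K + 1) 0} (hv : v ∈ C (K + 1) 0)
    (hv' : invPart v ∈ C 0 (K + 1))
    (hsing : ¬ w.IsSingleton (.inr 0) → ¬ v.IsSingleton (.inl (Fin.last K))) :
    rotate w ∈ C 0 (m + 1) := by
  rw [← le_antisymm (rotateVia_le_rotate w v) (rotate_le_rotateVia w v hsing)]
  have hid := hC.idPow_mem hv hv'
  have hinsert : insertLayer K w ∈ C (K + 1) ((K + (m + 1)) + 1) :=
    hC.tensor_mem _ _ (hC.tensor_mem _ _ (hid K) hw) hC.id_mem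
  have hcap : capLayer m v ∈ C ((K + (m + 1)) + 1) (m + 1) :=
    castPart_mem _ _ (hC.tensor_mem _ _ hv (hid (m + 1)))
  exact hC.comp_mem _ _ (hC.comp_mem _ _ hv' hinsert) hcap

theorem exists_not_isSingleton_zero (hC : IsGenCategory C) {K : ℕ} {q : CatPartition (K + 1) 0}
    (hq : q ∈ C (K + 1) 0) (hq' : invPart q ∈ C 0 (K + 1)) (x : Fin (K + 1))
    {w : CatPartition 0 (K + 1)} (hw : w ∈ C 0 (K + 1)) (hw' : invPart w ∈ C (K + 1) 0)
    (hx : ¬ w.IsSingleton (.inr x)) :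
    ∃ w' ∈ C 0 (K + 1), invPart w' ∈ C (K + 1) 0 ∧ ¬ w'.IsSingleton (.inr 0) := by
  induction x using Fin.induction generalizing w with
  | zero => exact ⟨w, hw, hw', hx⟩
  | succ i ih =>
    by_cases h0 : w.IsSingleton (.inr 0)
    · refine ih (hC.rotate_mem hw hq hq' (absurd h0))
        ((invPart_preimage hC).rotate_mem hw' hq' (by simpa using hq) (absurd h0)) ?_
      rwa [rotate, isSingleton_comap, Equiv.sumCongr_apply, Sum.map_inr, finRotate_apply,
        Fin.coeSucc_eq_succ]
    · exact ⟨w, hw, hw', h0⟩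

end IsGenCategory

/-- **Line rotation.** Let `C` be a generalized category of partitions containing
`p ∈ P(0,l)` as well as `q ∈ P(k,0)` and `q*`, where `q*` is not a tensor power of
lower singletons (i.e. `q` has a block of size at least two). Then every line rotated
version of `p` belongs to `C`. -/
theorem lineRotated_mem {k l : ℕ} (C : ∀ k l : ℕ, Set (CatPartition k l))
    (hC : IsGenCategory C)
    (p : CatPartition 0 l) (hp : p ∈ C 0 l)
    (q : CatPartition k 0) (hq : q ∈ C k 0) (hq' : CatPartition.invPart q ∈ C 0 k)
    (hq_ns : ∃ x y : Fin k ⊕ Fin 0, x ≠ y ∧ q.r x y)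
    (p' : CatPartition 0 l) (hrot : CatPartition.IsLineRotated p p') :
    p' ∈ C 0 l := by
  open CatPartition in
  obtain ⟨(a | ⟨_, ⟨⟩⟩), (b | ⟨_, ⟨⟩⟩), hab, hqab⟩ := hq_ns
  obtain _ | K := k
  · exact a.elim0
  obtain _ | m := l
  · exact Subsingleton.elim p p' ▸ hp
  have hqa : ¬ (invPart q).IsSingleton (.inr a) := fun hs =>
    hab (congrArg Sum.inl (Sum.inr_injective (hs (.inr b) hqab)).symm)
  obtain ⟨w, hw, hw', hw0⟩ := hC.exists_not_isSingleton_zero hq hq' a hq' (by simpa using hq) hqa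
  have hv : ¬ (reflPart (invPart w)).IsSingleton (.inl (Fin.last K)) :=
    (isSingleton_comap ((Equiv.sumCongr Fin.revPerm Fin.revPerm).trans (Equiv.sumComm _ _)) w
      _).not.mpr (by simpa using hw0)
  rw [hrot.eq_rotate]
  exact hC.rotate_mem hp (hC.refl_mem _ hw')
    (by rw [invPart_reflPart, invPart_invPart]; exact hC.refl_mem _ hw) fun _ => hv
end

section
/- Let q ∈ P(s,s) be a partition such that q = q* and q = qq (composition of q with itself). If the i-th upper point and the j-th lower point of q belong to the same block V, then the i-th lower point and the j-th upper point of q also belong to V. -/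
open scoped BigOperators

namespace Partition

/-- The disjoint sum of two setoids. -/
protected def sumSetoid {α β : Type*} (s : Setoid α) (t : Setoid β) : Setoid (α ⊕ β) :=
  Setoid.ker (Sum.map (Quotient.mk s) (Quotient.mk t))

/-- The tensor product (horizontal concatenation) of two partitions. -/
def tensorPart {k l k' l' : ℕ} (p : PartitionKL k l) (q : PartitionKL k' l') :
    PartitionKL (k + k') (l + l') :=
  Setoid.comap
    (Sum.elim
      (fun a : Fin (k + k') =>
        (Sum.map (Sum.inl : Fin k → Fin k ⊕ Fin l) (Sum.inl : Fin k' → Fin k' ⊕ Fin l')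
          (finSumFinEquiv.symm a)))
      (fun b : Fin (l + l') =>
        (Sum.map (Sum.inr : Fin l → Fin k ⊕ Fin l) (Sum.inr : Fin l' → Fin k' ⊕ Fin l')
          (finSumFinEquiv.symm b))))
    (Partition.sumSetoid p q)

/-- The composition `qp ∈ P(k,m)` of `p ∈ P(k,l)` with `q ∈ P(l,m)`: the lower points
of `p` are identified with the upper points of `q`, blocks that become connected are
joined, and the middle points are deleted. -/
def compPart {k l m : ℕ} (q : PartitionKL l m) (p : PartitionKL k l) : PartitionKL k m :=
  Setoid.comap (Sum.map (id : Fin k → Fin k) (Sum.inr : Fin m → Fin l ⊕ Fin m))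
    ((Setoid.ker fun x : Fin k ⊕ (Fin l ⊕ Fin m) =>
        Sum.map (Quotient.mk p) (id : Fin m → Fin m)
          ((Equiv.sumAssoc (Fin k) (Fin l) (Fin m)).symm x))
      ⊔ Setoid.ker (Sum.map (id : Fin k → Fin k) (Quotient.mk q)))

/-- The vertical reflection of a partition: the left-to-right order of the upper points
and of the lower points is reversed. -/
def reflPart {k l : ℕ} (p : PartitionKL k l) : PartitionKL k l :=
  Setoid.comap (Sum.map (Fin.rev : Fin k → Fin k) (Fin.rev : Fin l → Fin l)) p

/-- The involution `p* ∈ P(l,k)` of `p ∈ P(k,l)`: upper and lower points are interchanged. -/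
def invPart {k l : ℕ} (p : PartitionKL k l) : PartitionKL l k :=
  Setoid.comap (Sum.swap : Fin l ⊕ Fin k → Fin k ⊕ Fin l) p

/-- The `r`-fold tensor power of the identity partition: the `i`-th upper point is
connected to the `i`-th lower point. In particular `idPow 1` is the identity partition. -/
def idPow (r : ℕ) : PartitionKL r r := Setoid.ker (Sum.elim (id : Fin r → Fin r) id)

/-- Transport a partition along equalities of the numbers of points. -/
def castPart {k l k' l' : ℕ} (hk : k = k') (hl : l = l') (p : PartitionKL k l) :
    PartitionKL k' l' :=
  Setoid.comap (Sum.map (Fin.cast hk.symm) (Fin.cast hl.symm)) p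

/-- The partition `b_m ∈ P(0,m)` whose single block consists of all `m` lower points. -/
def bm (m : ℕ) : PartitionKL 0 m := ⊤

end Partition

/-! Since `q = q*`, a block joining the upper point `i` to the lower point `j` also joins the
upper point `j` to the lower point `i`. Stacking `q` on itself, the path `i → j → i` through the
middle row joins the upper and the lower point `i` in `qq = q`; the same holds for `j`, and
transitivity then joins the upper points `i` and `j`. -/

namespace Partition

theorem invPart_r {k l : ℕ} (p : PartitionKL k l) (x y : Fin l ⊕ Fin k) :
    (invPart p).r x y ↔ p.r x.swap y.swap :=
  Iff.rfl

theorem r_inl_inr_comm_of_eq_invPart {s : ℕ} {q : PartitionKL s s} (hq : q = invPart q)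
    {a b : Fin s} (hab : q.r (Sum.inl a) (Sum.inr b)) : q.r (Sum.inl b) (Sum.inr a) := by
  rw [hq, invPart_r]
  exact q.symm hab

theorem compPart_r_inl_inr {k l m : ℕ} {q : PartitionKL l m} {p : PartitionKL k l}
    {a : Fin k} {b : Fin l} {c : Fin m} (hab : p.r (Sum.inl a) (Sum.inr b))
    (hbc : q.r (Sum.inl b) (Sum.inr c)) : (compPart q p).r (Sum.inl a) (Sum.inr c) := by
  show (_ ⊔ _ : Setoid (Fin k ⊕ (Fin l ⊕ Fin m))).r (Sum.inl a) (Sum.inr (Sum.inr c))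
  refine Setoid.trans' _ (y := Sum.inr (Sum.inl b))
    (Setoid.le_def.mp le_sup_left ?_) (Setoid.le_def.mp le_sup_right ?_)
  · exact congrArg Sum.inl (Quotient.sound hab)
  · exact congrArg Sum.inr (Quotient.sound hbc)

end Partition

/-- Let `q ∈ P(s,s)` satisfy `q = q*` and `q = qq`. If the `i`-th upper point and the
`j`-th lower point of `q` lie in the same block `V`, then the `i`-th lower point and
the `j`-th upper point also lie in `V`. -/
theorem projective_partition_symm {s : ℕ} (q : PartitionKL s s)
    (hq_star : q = Partition.invPart q) (hq_idem : q = Partition.compPart q q)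
    (i j : Fin s) (h : q.r (Sum.inl i) (Sum.inr j)) :
    q.r (Sum.inl i) (Sum.inr i) ∧ q.r (Sum.inl i) (Sum.inl j) := by
  have hji : q.r (Sum.inl j) (Sum.inr i) := Partition.r_inl_inr_comm_of_eq_invPart hq_star h
  have hii : q.r (Sum.inl i) (Sum.inr i) := by
    rw [hq_idem]
    exact Partition.compPart_r_inl_inr h hji
  have hjj : q.r (Sum.inl j) (Sum.inr j) := by
    rw [hq_idem]
    exact Partition.compPart_r_inl_inr hji h
  exact ⟨hii, q.trans h (q.symm hjj)⟩
end

section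
/- Let m ≥ 2 and n ∈ ℕ. Let π_m ∈ P(m,m) be the partition whose single block contains all m upper and all m lower points, and let σ_m ∈ P(m,m) be the partition whose blocks are: the four-point block consisting of the first and last upper points together with the first and last lower points, and the pair blocks consisting of the i-th upper point and the i-th lower point for each 1 < i < m. Let A be a unital C*-algebra and let u_{ij} ∈ A (1 ≤ i,j ≤ n) be self-adjoint elements which fulfill the relations R(p₀) for some p₀ ∈ P(0,l) (l ≥ 1) and R(q₀) for some q₀ ∈ P(k,0) (k ≥ 1). If the u_{ij} fulfill R(π_m) or fulfill R(σ_m), then Σ_{a=1}^n u_{ia}u_{ja} = δ_{ij}·1 and Σ_{a=1}^n u_{ai}u_{aj} = δ_{ij}·1 for all 1 ≤ i,j ≤ n (i.e., the matrix u = (u_{ij}) is orthogonal: uuᵗ = uᵗu = 1 in M_n(A)). -/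
open scoped BigOperators

/-- The partition `σ_m ∈ P(m,m)`: its blocks are the four-point block consisting of
the first and last upper points together with the first and last lower points, and the
pair blocks consisting of the `i`-th upper and the `i`-th lower point for `1 < i < m`.
(The partition `π_m ∈ P(m,m)`, whose single block contains all points, is `⊤`.) -/
def sigmaPart (m : ℕ) : PartitionKL m m :=
  Setoid.ker fun x : Fin m ⊕ Fin m =>
    (fun i : Fin m => if (i : ℕ) = m - 1 then (0 : ℕ) else (i : ℕ)) (Sum.elim id id x)

/-!
Both `π_m` and `σ_m` join every upper point to the lower point beneath it and the first upper
point to the last one. For such a partition, testing `R(p)` on a constant word against the word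
`(i, …, i, j)` kills one side and leaves a single term on the other: `u_{ia}^{m-1} u_{ja} = 0`
for `i ≠ j`, and likewise within rows. Since `(x^k y)^* (x^k y) = y^* x^{2k} y` for self-adjoint
`x`, the C*-identity lowers the power to `u_{ia} u_{ja} = 0`. For a row of pairwise orthogonal
entries, `R(p₀)` reads `∑_a u_{ia}^l = 1`, so `u_{ia}^{l+1} = u_{ia}`; the spectrum of `u_{ia}`
then lies in `{-1, 0, 1}`, hence `u_{ia}^{l+2} = u_{ia}^l` and
`∑_a u_{ia}^2 = (∑_a u_{ia}^l)(∑_b u_{ib}^2) = ∑_a u_{ia}^{l+2} = 1`. Columns use `R(q₀)`.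
-/

theorem IsSelfAdjoint.mul_eq_zero_of_pow_mul_eq_zero {A : Type*} [NormedRing A] [StarRing A]
    [CStarRing A] {x y : A} (hx : IsSelfAdjoint x) {N : ℕ} (h : x ^ N * y = 0) : x * y = 0 := by
  have halve : ∀ k, x ^ (2 * k) * y = 0 → x ^ k * y = 0 := fun k hk => by
    refine (CStarRing.star_mul_self_eq_zero_iff _).mp ?_
    rw [star_mul, (hx.pow k).star_eq, mul_assoc, ← mul_assoc (x ^ k), ← pow_add, ← two_mul,
      hk, mul_zero]
  have hpow : ∀ r, x ^ 2 ^ r * y = 0 → x * y = 0 := fun r => by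
    induction r with
    | zero => simp
    | succ r ih => exact fun hr => ih (halve _ (by rwa [← pow_succ']))
  exact hpow N (pow_mul_eq_zero_of_le (Nat.lt_two_pow_self).le h)

section OrthogonalFamily

variable {A : Type*} [Semiring A] {ι : Type*} [Fintype ι] {x : ι → A}

theorem pow_mul_pow_eq_zero_of_mul_eq_zero {a b : A} (h : a * b = 0) {p q : ℕ} (hp : p ≠ 0)
    (hq : q ≠ 0) : a ^ p * b ^ q = 0 := by
  obtain ⟨p, rfl⟩ := Nat.exists_eq_succ_of_ne_zero hp
  obtain ⟨q, rfl⟩ := Nat.exists_eq_succ_of_ne_zero hq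
  rw [pow_succ, pow_succ', mul_assoc, ← mul_assoc a, h, zero_mul, mul_zero]

theorem pow_mul_sum_pow_of_pairwise_mul_eq_zero (hx : ∀ a b, a ≠ b → x a * x b = 0) (b : ι)
    {p q : ℕ} (hp : p ≠ 0) (hq : q ≠ 0) : x b ^ p * ∑ a, x a ^ q = x b ^ (p + q) := by
  classical
  rw [Finset.mul_sum, Finset.sum_eq_single b, pow_add]
  · exact fun a _ hab => pow_mul_pow_eq_zero_of_mul_eq_zero (hx b a hab.symm) hp hq
  · simp

theorem pow_succ_eq_self_of_sum_pow_eq_one (hx : ∀ a b, a ≠ b → x a * x b = 0) {l : ℕ}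
    (hl : l ≠ 0) (hsum : ∑ a, x a ^ l = 1) (b : ι) : x b ^ (l + 1) = x b := by
  simpa [hsum, add_comm] using
    (pow_mul_sum_pow_of_pairwise_mul_eq_zero hx b one_ne_zero hl).symm

theorem sum_mul_self_eq_one_of_sum_pow_eq_one (hx : ∀ a b, a ≠ b → x a * x b = 0) {l : ℕ}
    (hl : l ≠ 0) (hsum : ∑ a, x a ^ l = 1) (hcycle : ∀ a, x a ^ (l + 2) = x a ^ l) :
    ∑ a, x a * x a = 1 :=
  calc ∑ b, x b * x b = (∑ a, x a ^ l) * ∑ b, x b ^ 2 := by simp [hsum, sq]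
    _ = ∑ a, x a ^ (l + 2) := by
      rw [Finset.sum_mul]
      exact Finset.sum_congr rfl fun a _ =>
        pow_mul_sum_pow_of_pairwise_mul_eq_zero hx a hl two_ne_zero
    _ = 1 := by simp only [hcycle, hsum]

end OrthogonalFamily

theorem pow_add_two_eq_pow_of_pow_succ_eq_self {R : Type*} [Ring R] [LinearOrder R]
    [IsStrictOrderedRing R] {t : R} {l : ℕ} (hl : l ≠ 0)
    (ht : t ^ (l + 1) = t) : t ^ (l + 2) = t ^ l := by
  rcases eq_or_ne t 0 with rfl | ht0
  · simp [hl]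
  have hpow : t ^ l = 1 := mul_left_cancel₀ ht0 (by rw [← pow_succ', ht, mul_one])
  have habs : |t| = 1 :=
    (pow_eq_one_iff_of_nonneg (abs_nonneg t) hl).mp (by rw [← abs_pow, hpow, abs_one])
  rw [pow_add, ← sq_abs, habs, one_pow, mul_one]

theorem IsSelfAdjoint.pow_add_two_eq_pow_of_pow_succ_eq_self {A : Type*} [CStarAlgebra A]
    {x : A} (hx : IsSelfAdjoint x) {l : ℕ} (hl : l ≠ 0) (h : x ^ (l + 1) = x) :
    x ^ (l + 2) = x ^ l := by
  have hspec : ∀ t ∈ spectrum ℝ x, t ^ (l + 1) = t :=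
    eqOn_of_cfc_eq_cfc (a := x) (f := fun t : ℝ => t ^ (l + 1)) (g := id)
      (by rw [cfc_pow_id x (l + 1), cfc_id ℝ x, h])
  rw [← cfc_pow_id (R := ℝ) x, ← cfc_pow_id (R := ℝ) x]
  exact cfc_congr fun t ht => _root_.pow_add_two_eq_pow_of_pow_succ_eq_self hl (hspec t ht)

theorem sum_mul_self_eq_one_of_isSelfAdjoint {A : Type*} [CStarAlgebra A] {ι : Type*}
    [Fintype ι] {x : ι → A} (hsa : ∀ a, IsSelfAdjoint (x a))
    (hx : ∀ a b, a ≠ b → x a * x b = 0) {l : ℕ} (hl : l ≠ 0) (hsum : ∑ a, x a ^ l = 1) :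
    ∑ a, x a * x a = 1 :=
  sum_mul_self_eq_one_of_sum_pow_eq_one hx hl hsum fun a =>
    (hsa a).pow_add_two_eq_pow_of_pow_succ_eq_self hl
      (pow_succ_eq_self_of_sum_pow_eq_one hx hl hsum a)

section OrthogonalWords

variable {A : Type*} [Semiring A] {ι : Type*} {x : ι → A}

theorem mul_prod_ofFn_eq_ite_of_pairwise_mul_eq_zero [DecidableEq ι]
    (hx : ∀ a b, a ≠ b → x a * x b = 0) (a : ι) :
    ∀ {r : ℕ} (γ : Fin r → ι),
      x a * (List.ofFn fun t => x (γ t)).prod = if γ = (fun _ => a) then x a ^ (r + 1) else 0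
  | 0, γ => by simp [Subsingleton.elim γ (fun _ => a)]
  | r + 1, γ => by
    rw [List.ofFn_succ, List.prod_cons, ← mul_assoc]
    by_cases h0 : γ 0 = a
    · have hγ : γ = (fun _ => a) ↔ (fun t : Fin r => γ t.succ) = (fun _ => a) := by
        simp only [funext_iff, Fin.forall_fin_succ, h0, true_and]
      rw [h0, mul_assoc,
        mul_prod_ofFn_eq_ite_of_pairwise_mul_eq_zero hx a fun t : Fin r => γ t.succ, mul_ite,
        mul_zero, ← pow_succ']
      exact if_congr hγ.symm rfl rfl
    · rw [hx a _ (Ne.symm h0), zero_mul, if_neg fun h => h0 (by rw [h])]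

theorem sum_ite_prod_ofFn_eq_sum_pow [Fintype ι] (hx : ∀ a b, a ≠ b → x a * x b = 0)
    {r : ℕ} (Q : (Fin (r + 1) → ι) → Prop) [DecidablePred Q] (hQ : ∀ a, Q fun _ => a) :
    (∑ γ, if Q γ then (List.ofFn fun t => x (γ t)).prod else 0) = ∑ a, x a ^ (r + 1) := by
  classical
  rw [← (Fin.consEquiv fun _ : Fin (r + 1) => ι).sum_comp (M := A), Fintype.sum_prod_type]
  refine Finset.sum_congr rfl fun a _ => ?_
  have hcons : Fin.consEquiv (fun _ : Fin (r + 1) => ι) (a, fun _ => a) = fun _ => a := by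
    funext t; cases t using Fin.cases <;> rfl
  simp only [Fin.consEquiv_apply, List.ofFn_succ, Fin.cons_zero, Fin.cons_succ, List.prod_cons,
    mul_prod_ofFn_eq_ite_of_pairwise_mul_eq_zero hx a]
  calc _ = ∑ γ : Fin r → ι, if γ = (fun _ => a) then x a ^ (r + 1) else 0 :=
        Finset.sum_congr rfl fun γ _ => ?_
    _ = x a ^ (r + 1) := Fintype.sum_ite_eq' _ _
  by_cases hγ : γ = fun _ => a
  · subst hγ
    simp only [hcons, hQ, if_true]
  · simp only [hγ, if_false, ite_self]

end OrthogonalWords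

namespace PartitionKL

theorem deltaCond_const {k l n : ℕ} (p : PartitionKL k l) (a : Fin n) :
    DeltaCond p (fun _ => a) (fun _ => a) := by
  rintro (x | x) (y | y) - <;> rfl

section Words

variable {n m : ℕ} {A : Type*} [Monoid A] (u : Fin n → Fin n → A)

theorem uProd_snoc_const_left (i j a : Fin n) :
    uProd u (Fin.snoc (fun _ : Fin m => i) j) (fun _ => a) = u i a ^ m * u j a := by
  rw [uProd, List.ofFn_succ', List.prod_concat]
  simp [List.prod_replicate]

theorem uProd_snoc_const_right (i a b : Fin n) :
    uProd u (fun _ => i) (Fin.snoc (fun _ : Fin m => a) b) = u i a ^ m * u i b := by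
  rw [uProd, List.ofFn_succ', List.prod_concat]
  simp [List.prod_replicate]

end Words

section Linking

variable {n m : ℕ} {p : PartitionKL (m + 1) (m + 1)}
  (hvert : ∀ t, p.r (.inl t) (.inr t))
include hvert

theorem deltaCond_const_left_iff {a : Fin n} {γ : Fin (m + 1) → Fin n} :
    DeltaCond p (fun _ => a) γ ↔ γ = fun _ => a :=
  ⟨fun h => funext fun t => (h _ _ (hvert t)).symm, fun h => h ▸ deltaCond_const p a⟩

theorem deltaCond_const_right_iff {a : Fin n} {γ : Fin (m + 1) → Fin n} :
    DeltaCond p γ (fun _ => a) ↔ γ = fun _ => a :=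
  ⟨fun h => funext fun t => h _ _ (hvert t), fun h => h ▸ deltaCond_const p a⟩

variable {A : Type*} [Ring A] {u : Fin n → Fin n → A}

theorem FulfillsR.pow_mul_eq_zero_of_ne_same_column (hends : p.r (.inl 0) (.inl (Fin.last m)))
    (hm : m ≠ 0) (hp : FulfillsR p u) {i j : Fin n} (hij : i ≠ j) (a : Fin n) :
    u i a ^ m * u j a = 0 := by
  have h := hp (fun _ => a) (Fin.snoc (fun _ => i) j)
  simp only [deltaCond_const_left_iff hvert, Fintype.sum_ite_eq', uProd_snoc_const_left] at h
  rw [← h]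
  have hlower : p.r (.inr 0) (.inr (Fin.last m)) :=
    p.iseqv.trans (p.iseqv.symm (hvert 0)) (p.iseqv.trans hends (hvert _))
  refine Finset.sum_eq_zero fun γ _ => if_neg fun hγ => hij ?_
  obtain ⟨m, rfl⟩ := Nat.exists_eq_succ_of_ne_zero hm
  simpa using hγ _ _ hlower

theorem FulfillsR.pow_mul_eq_zero_of_ne_same_row (hends : p.r (.inl 0) (.inl (Fin.last m)))
    (hm : m ≠ 0) (hp : FulfillsR p u) (i : Fin n) {a b : Fin n} (hab : a ≠ b) :
    u i a ^ m * u i b = 0 := by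
  have h := hp (Fin.snoc (fun _ => a) b) (fun _ => i)
  simp only [deltaCond_const_right_iff hvert, Fintype.sum_ite_eq', uProd_snoc_const_right] at h
  rw [h]
  refine Finset.sum_eq_zero fun γ _ => if_neg fun hγ => hab ?_
  obtain ⟨m, rfl⟩ := Nat.exists_eq_succ_of_ne_zero hm
  simpa using hγ _ _ hends

end Linking

theorem deltaCond_of_upper_empty {l n : ℕ} (p : PartitionKL 0 l) (α : Fin 0 → Fin n)
    (a : Fin n) :
    DeltaCond p α (fun _ => a) :=
  Subsingleton.elim (fun _ => a) α ▸ deltaCond_const p a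

theorem deltaCond_of_lower_empty {k n : ℕ} (p : PartitionKL k 0) (a : Fin n)
    (β : Fin 0 → Fin n) :
    DeltaCond p (fun _ => a) β :=
  Subsingleton.elim (fun _ => a) β ▸ deltaCond_const p a

variable {n : ℕ} {A : Type*} [Ring A] {u : Fin n → Fin n → A}

theorem FulfillsR.sum_pow_row_eq_one {l : ℕ} (hl : l ≠ 0) {p : PartitionKL 0 l}
    (hp : FulfillsR p u) (hrow : ∀ i a b, a ≠ b → u i a * u i b = 0) (i : Fin n) :
    ∑ a, u i a ^ l = 1 := by
  classical
  obtain ⟨r, rfl⟩ : ∃ r, l = r + 1 := ⟨l - 1, by omega⟩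
  have h := hp Fin.elim0 (fun _ => i)
  rw [Fintype.sum_unique, if_pos (deltaCond_of_upper_empty p _ i)] at h
  rw [← sum_ite_prod_ofFn_eq_sum_pow (hrow i) _ (deltaCond_of_upper_empty p Fin.elim0)]
  exact h.symm.trans (by simp [uProd])

theorem FulfillsR.sum_pow_column_eq_one {k : ℕ} (hk : k ≠ 0) {p : PartitionKL k 0}
    (hp : FulfillsR p u) (hcol : ∀ a i j, i ≠ j → u i a * u j a = 0) (a : Fin n) :
    ∑ i, u i a ^ k = 1 := by
  classical
  obtain ⟨r, rfl⟩ : ∃ r, k = r + 1 := ⟨k - 1, by omega⟩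
  have h := hp (fun _ => a) Fin.elim0
  rw [Fintype.sum_unique (ι := Fin 0 → Fin n), if_pos (deltaCond_of_lower_empty p a _)] at h
  rw [← sum_ite_prod_ofFn_eq_sum_pow (x := fun i => u i a) (hcol a)
    (fun γ => DeltaCond p γ Fin.elim0) (fun i => deltaCond_of_lower_empty p i Fin.elim0)]
  exact h.trans (by simp [uProd])

end PartitionKL

theorem sigmaPart_rel_inl_inr {m : ℕ} (t : Fin m) : (sigmaPart m).r (.inl t) (.inr t) :=
  Setoid.ker_def.mpr rfl

theorem sigmaPart_rel_zero_last (m : ℕ) : (sigmaPart (m + 1)).r (.inl 0) (.inl (Fin.last m)) :=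
  Setoid.ker_def.mpr (by simp)

/-- **Enforced orthogonality via `π_m` or `σ_m`.** Let `m ≥ 2` and let the self-adjoint
elements `u i j` of a unital C*-algebra fulfill `R(p₀)` for some `p₀ ∈ P(0,l)` (`l ≥ 1`)
and `R(q₀)` for some `q₀ ∈ P(k,0)` (`k ≥ 1`). If they fulfill `R(π_m)` or `R(σ_m)`,
then the matrix `u` is orthogonal: `u uᵗ = uᵗ u = 1`. -/
theorem piSigma_enforce_orthogonality {m n k l : ℕ} (hm : 2 ≤ m) (hl : 1 ≤ l) (hk : 1 ≤ k)
    {A : Type*} [CStarAlgebra A] (u : Fin n → Fin n → A)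
    (hsa : ∀ i j, star (u i j) = u i j)
    (p₀ : PartitionKL 0 l) (hp₀ : PartitionKL.FulfillsR p₀ u)
    (q₀ : PartitionKL k 0) (hq₀ : PartitionKL.FulfillsR q₀ u)
    (hπσ : PartitionKL.FulfillsR (⊤ : PartitionKL m m) u ∨ PartitionKL.FulfillsR (sigmaPart m) u) :
    ∀ i j : Fin n,
      (∑ a : Fin n, u i a * u j a) = (if i = j then 1 else 0)
      ∧ (∑ a : Fin n, u a i * u a j) = (if i = j then 1 else 0) := by
  obtain ⟨m, rfl⟩ : ∃ m', m = m' + 1 := ⟨m - 1, by omega⟩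
  obtain ⟨p, hp, hvert, hends⟩ : ∃ p : PartitionKL (m + 1) (m + 1), p.FulfillsR u ∧
      (∀ t, p.r (.inl t) (.inr t)) ∧ p.r (.inl 0) (.inl (Fin.last m)) := by
    rcases hπσ with hπ | hσ
    · exact ⟨⊤, hπ, fun _ => trivial, trivial⟩
    · exact ⟨sigmaPart _, hσ, sigmaPart_rel_inl_inr, sigmaPart_rel_zero_last m⟩
  have hcol : ∀ a i j, i ≠ j → u i a * u j a = 0 := fun a i j hij =>
    IsSelfAdjoint.mul_eq_zero_of_pow_mul_eq_zero (hsa i a)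
      (hp.pow_mul_eq_zero_of_ne_same_column hvert hends (by omega) hij a)
  have hrow : ∀ i a b, a ≠ b → u i a * u i b = 0 := fun i a b hab =>
    IsSelfAdjoint.mul_eq_zero_of_pow_mul_eq_zero (hsa i a)
      (hp.pow_mul_eq_zero_of_ne_same_row hvert hends (by omega) i hab)
  have hrow_sq (i : Fin n) : ∑ a, u i a * u i a = 1 :=
    sum_mul_self_eq_one_of_isSelfAdjoint (hsa i) (hrow i) (by omega)
      (hp₀.sum_pow_row_eq_one (by omega) hrow i)
  have hcol_sq (a : Fin n) : ∑ i, u i a * u i a = 1 :=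
    sum_mul_self_eq_one_of_isSelfAdjoint (hsa · a) (hcol a) (by omega)
      (hq₀.sum_pow_column_eq_one (by omega) hcol a)
  intro i j
  rcases eq_or_ne i j with rfl | hij
  · simp only [if_true, hrow_sq, hcol_sq, and_self]
  · simp only [if_neg hij]
    exact ⟨Finset.sum_eq_zero fun a _ => hcol a i j hij,
      Finset.sum_eq_zero fun a _ => hrow a i j hij⟩
end
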